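/- arXiv:math/0010254 — 7 statements merged into one kernel-verified Lean document; each statement's English description precedes it below -/
import Mathlib

section
/- Let σ be a permutation of a finite set x and t = (z, z') a transposition. If z and z' lie in the same orbit of σ, then |σt| = |σ| − 1; if they lie in different orbits, then |σt| = |σ| + 1, where |·| denotes minimal transposition length. -/
/-- The minimal number of transpositions needed to write `σ` as a product of
transpositions. -/
noncomputable def swapLength {α : Type*} [DecidableEq α] (σ : Equiv.Perm α) : ℕ :=
  sInf {n | ∃ l : List (Equiv.Perm α), l.length = n ∧ (∀ t ∈ l, t.IsSwap) ∧ l.prod = σ}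

open Equiv Equiv.Perm Finset

set_option linter.unusedSectionVars false
set_option linter.unusedVariables false

namespace SwapLengthAux

variable {α : Type*} [DecidableEq α] [Fintype α]

lemma exists_pos_pow_fix (σ : Equiv.Perm α) (a : α) : ∃ m, 0 < m ∧ (σ ^ m) a = a :=
  ⟨orderOf σ, orderOf_pos σ, by rw [pow_orderOf_eq_one]; rfl⟩

/-- walking lemma: powers of `σ * swap z z'` applied to `z` follow the `σ`-orbit of `z'`
as long as it avoids `z` and `z'`. -/
lemma walk_key (σ : Equiv.Perm α) (z z' : α) (k : ℕ)
    (h : ∀ j, 0 < j → j < k → (σ ^ j) z' ≠ z ∧ (σ ^ j) z' ≠ z') :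
    ∀ j, 1 ≤ j → j ≤ k → ((σ * Equiv.swap z z') ^ j) z = (σ ^ j) z' := by
  intro j hj1
  induction j, hj1 using Nat.le_induction with
  | base =>
    intro _
    simp [Equiv.Perm.mul_apply, Equiv.swap_apply_left]
  | succ j hj ih =>
    intro hjk
    have hjk' : j < k := by omega
    obtain ⟨h1, h2⟩ := h j (by omega) hjk'
    rw [pow_succ', Equiv.Perm.mul_apply, ih (by omega), Equiv.Perm.mul_apply,
      Equiv.swap_apply_of_ne_of_ne h1 h2, ← Equiv.Perm.mul_apply, ← pow_succ']

/-- In the merge case (`z, z'` in different orbits), `z` and `z'` are in the same orbit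
of `σ * swap z z'`. -/
lemma sameCycle_mul_swap (σ : Equiv.Perm α) {z z' : α} (hzz' : z ≠ z')
    (hm : ¬ σ.SameCycle z z') : (σ * Equiv.swap z z').SameCycle z z' := by
  have hex : ∃ m, 0 < m ∧ (σ ^ m) z' = z' := exists_pos_pow_fix σ z'
  obtain ⟨hm0, hmfix⟩ := Nat.find_spec hex
  set m := Nat.find hex with hmdef
  have hkey := walk_key σ z z' m (fun j hj0 hjm => by
    constructor
    · intro hh
      exact hm (Equiv.Perm.SameCycle.symm ⟨(j : ℤ), by rw [zpow_natCast, hh]⟩)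
    · intro hh
      exact Nat.find_min hex hjm ⟨hj0, hh⟩)
  exact ⟨(m : ℤ), by rw [zpow_natCast, hkey m hm0 le_rfl, hmfix]⟩

/-- If `ρ ^ k` fixes `a` then every `ℤ`-power of `ρ` at `a` is a small `ℕ`-power. -/
lemma zpow_reduce (ρ : Equiv.Perm α) (a : α) (k : ℕ) (hk : 0 < k) (hfix : (ρ ^ k) a = a)
    (i : ℤ) : ∃ r : ℕ, r < k ∧ (ρ ^ r) a = (ρ ^ i) a := by
  have hk' : (0 : ℤ) < (k : ℤ) := by exact_mod_cast hk
  refine ⟨(i % (k : ℤ)).toNat, ?_, ?_⟩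
  · have h1 := Int.emod_lt_of_pos i hk'
    have h2 := Int.emod_nonneg i hk'.ne'
    have h3 := Int.toNat_of_nonneg h2
    omega
  · have h2 := Int.emod_nonneg i hk'.ne'
    have hsplit : i = i % (k : ℤ) + (k : ℤ) * (i / (k : ℤ)) := by
      rw [add_comm]; exact (Int.mul_ediv_add_emod i (k : ℤ)).symm
    have hfix' : ∀ q : ℤ, ((ρ ^ (k : ℤ)) ^ q) a = a := by
      intro q
      apply Equiv.Perm.zpow_apply_eq_self_of_apply_eq_self
      rw [zpow_natCast]; exact hfix
    calc (ρ ^ (i % (k : ℤ)).toNat) a = (ρ ^ (i % (k : ℤ))) a := by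
          rw [← zpow_natCast, Int.toNat_of_nonneg h2]
      _ = (ρ ^ (i % (k : ℤ))) (((ρ ^ (k : ℤ)) ^ (i / (k : ℤ))) a) := by rw [hfix']
      _ = (ρ ^ i) a := by
          rw [← zpow_mul, ← Equiv.Perm.mul_apply, ← zpow_add, ← hsplit]

/-- In the split case (`z, z'` in the same orbit), `z` and `z'` are in different orbits
of `σ * swap z z'`. -/
lemma not_sameCycle_mul_swap (σ : Equiv.Perm α) {z z' : α} (hzz' : z ≠ z')
    (hs : σ.SameCycle z z') : ¬ (σ * Equiv.swap z z').SameCycle z z' := by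
  have hex : ∃ j, 0 < j ∧ (σ ^ j) z' = z := by
    obtain ⟨i, hi, h⟩ := hs.symm.exists_pow_eq'
    rcases Nat.eq_zero_or_pos i with h0 | hp
    · exact absurd (by simpa [h0] using h) hzz'.symm
    · exact ⟨i, hp, h⟩
  obtain ⟨hk0, hkz⟩ := Nat.find_spec hex
  set k := Nat.find hex with hkdef
  have hne_z : ∀ j, 0 < j → j < k → (σ ^ j) z' ≠ z := fun j h0 hj hh =>
    Nat.find_min hex hj ⟨h0, hh⟩
  have hne_z' : ∀ j, 0 < j → j < k → (σ ^ j) z' ≠ z' := by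
    intro j h0 hj hh
    have hsub : (σ ^ (k - j)) z' = z := by
      have h1 : (σ ^ (k - j)) ((σ ^ j) z') = (σ ^ k) z' := by
        rw [← Equiv.Perm.mul_apply, ← pow_add, Nat.sub_add_cancel hj.le]
      rw [hh] at h1
      rw [h1, hkz]
    exact hne_z (k - j) (by omega) (by omega) hsub
  have hkey := walk_key σ z z' k (fun j h0 hj => ⟨hne_z j h0 hj, hne_z' j h0 hj⟩)
  have hfixz : ((σ * Equiv.swap z z') ^ k) z = z := by rw [hkey k hk0 le_rfl, hkz]
  rintro ⟨i, hi⟩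
  obtain ⟨r, hrk, hr⟩ := zpow_reduce (σ * Equiv.swap z z') z k hk0 hfixz i
  rw [hi] at hr
  rcases Nat.eq_zero_or_pos r with h0 | hr0
  · rw [h0] at hr; simp at hr; exact hzz' hr
  · rw [hkey r hr0 hrk.le] at hr
    exact hne_z' r hr0 hrk hr



/-- The relation obtained from `SameCycle σ` by merging the classes of `z` and `z'`. -/
def merged (σ : Equiv.Perm α) (z z' x y : α) : Prop :=
  σ.SameCycle x y ∨
    ((σ.SameCycle x z ∨ σ.SameCycle x z') ∧ (σ.SameCycle y z ∨ σ.SameCycle y z'))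

lemma merged_trans {σ : Equiv.Perm α} {z z' x y w : α} (h1 : merged σ z z' x y)
    (h2 : merged σ z z' y w) : merged σ z z' x w := by
  rcases h1 with h1 | ⟨hx, hy⟩
  · rcases h2 with h2 | ⟨hy', hw⟩
    · exact Or.inl (h1.trans h2)
    · exact Or.inr ⟨Or.imp h1.trans h1.trans hy', hw⟩
  · rcases h2 with h2 | ⟨hy', hw⟩
    · exact Or.inr ⟨hx, Or.imp h2.symm.trans h2.symm.trans hy⟩
    · exact Or.inr ⟨hx, hw⟩

lemma merged_edge (σ : Equiv.Perm α) (z z' x : α) :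
    merged σ z z' x ((σ * Equiv.swap z z') x) := by
  rcases eq_or_ne x z with rfl | hxz
  · refine Or.inr ⟨Or.inl (Equiv.Perm.SameCycle.refl _ _), Or.inr ?_⟩
    rw [Equiv.Perm.mul_apply, Equiv.swap_apply_left]
    exact Equiv.Perm.SameCycle.symm ⟨1, by simp⟩
  rcases eq_or_ne x z' with rfl | hxz'
  · refine Or.inr ⟨Or.inr (Equiv.Perm.SameCycle.refl _ _), Or.inl ?_⟩
    rw [Equiv.Perm.mul_apply, Equiv.swap_apply_right]
    exact Equiv.Perm.SameCycle.symm ⟨1, by simp⟩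
  · refine Or.inl ?_
    rw [Equiv.Perm.mul_apply, Equiv.swap_apply_of_ne_of_ne hxz hxz']
    exact ⟨1, by simp⟩

/-- Any two points in the same cycle of `σ * swap z z'` are `merged`-related. -/
lemma merged_of_sameCycle_mul_swap {σ : Equiv.Perm α} {z z' x y : α}
    (h : (σ * Equiv.swap z z').SameCycle x y) : merged σ z z' x y := by
  obtain ⟨i, hik, hi⟩ := h.exists_pow_eq'
  subst hi
  clear hik h
  induction i with
  | zero => exact Or.inl (Equiv.Perm.SameCycle.refl _ _)
  | succ n ih =>
    have hedge := merged_edge σ z z' (((σ * Equiv.swap z z') ^ n) x)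
    rw [pow_succ', Equiv.Perm.mul_apply]
    exact merged_trans ih hedge

/-- In the merge case, `SameCycle σ` lifts to `SameCycle (σ * swap z z')`. -/
lemma sameCycle_mul_swap_of_sameCycle {σ : Equiv.Perm α} {z z' : α} (hzz' : z ≠ z')
    (hm : ¬ σ.SameCycle z z') {x y : α} (h : σ.SameCycle x y) :
    (σ * Equiv.swap z z').SameCycle x y := by
  have hzz : (σ * Equiv.swap z z').SameCycle z z' := sameCycle_mul_swap σ hzz' hm
  have edge : ∀ w : α, (σ * Equiv.swap z z').SameCycle w (σ w) := by
    intro w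
    by_cases hwz : w = z
    · subst hwz
      have hw1 : σ w = (σ * Equiv.swap w z') z' := by
        rw [Equiv.Perm.mul_apply, Equiv.swap_apply_right]
      rw [hw1]
      exact hzz.apply_right
    by_cases hwz' : w = z'
    · subst hwz'
      have hw1 : σ w = (σ * Equiv.swap z w) z := by
        rw [Equiv.Perm.mul_apply, Equiv.swap_apply_left]
      rw [hw1]
      exact hzz.symm.apply_right
    · have : σ w = (σ * Equiv.swap z z') w := by
        rw [Equiv.Perm.mul_apply, Equiv.swap_apply_of_ne_of_ne hwz hwz']
      rw [this]
      exact ⟨1, by simp⟩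
  obtain ⟨i, hik, hi⟩ := h.exists_pow_eq'
  subst hi
  clear hik h
  induction i with
  | zero => exact Equiv.Perm.SameCycle.refl _ _
  | succ n ih =>
    rw [pow_succ', Equiv.Perm.mul_apply]
    exact ih.trans (edge _)

/-- Merge case: full description of `SameCycle (σ * swap z z')`. -/
lemma sameCycle_mul_swap_iff {σ : Equiv.Perm α} {z z' : α} (hzz' : z ≠ z')
    (hm : ¬ σ.SameCycle z z') {x y : α} :
    (σ * Equiv.swap z z').SameCycle x y ↔ merged σ z z' x y := by
  constructor
  · exact merged_of_sameCycle_mul_swap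
  · rintro (h | ⟨hx, hy⟩)
    · exact sameCycle_mul_swap_of_sameCycle hzz' hm h
    · have hzz : (σ * Equiv.swap z z').SameCycle z z' := sameCycle_mul_swap σ hzz' hm
      have lift : ∀ {u v : α}, σ.SameCycle u v → (σ * Equiv.swap z z').SameCycle u v :=
        fun h => sameCycle_mul_swap_of_sameCycle hzz' hm h
      have hx' : (σ * Equiv.swap z z').SameCycle x z := by
        rcases hx with h | h
        · exact lift h
        · exact (lift h).trans hzz.symm
      have hy' : (σ * Equiv.swap z z').SameCycle y z := by
        rcases hy with h | h
        · exact lift h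
        · exact (lift h).trans hzz.symm
      exact hx'.trans hy'.symm




/-- The orbit of `a` under `σ` as a finset. -/
def orb (σ : Perm α) (a : α) : Finset α := Finset.univ.filter (σ.SameCycle a)

lemma mem_orb {σ : Perm α} {a b : α} : b ∈ orb σ a ↔ σ.SameCycle a b := by
  simp [orb]

lemma orb_card_pos (σ : Perm α) (a : α) : 0 < (orb σ a).card :=
  Finset.card_pos.2 ⟨a, mem_orb.2 (Equiv.Perm.SameCycle.refl _ _)⟩

lemma orb_eq_of_sameCycle {σ : Perm α} {a b : α} (h : σ.SameCycle a b) :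
    orb σ a = orb σ b := by
  ext y; simp only [mem_orb]
  exact ⟨fun hy => h.symm.trans hy, fun hy => h.trans hy⟩

/-- The number of orbits of `σ`, as a rational number. -/
noncomputable def cyc (σ : Perm α) : ℚ := ∑ a : α, ((orb σ a).card : ℚ)⁻¹

lemma cyc_one : cyc (1 : Perm α) = Fintype.card α := by
  have h : ∀ a : α, orb (1 : Perm α) a = {a} := by
    intro a; ext b; simp [mem_orb, Equiv.Perm.sameCycle_one, eq_comm]
  rw [cyc]
  rw [Finset.sum_congr rfl (fun a _ => by rw [h a, Finset.card_singleton, Nat.cast_one, inv_one])]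
  rw [Finset.sum_const, Finset.card_univ, nsmul_eq_mul, mul_one]

lemma cyc_inv (σ : Perm α) : cyc σ⁻¹ = cyc σ := by
  have h : ∀ a : α, orb σ⁻¹ a = orb σ a := by
    intro a; ext b; simp [mem_orb, Equiv.Perm.sameCycle_inv]
  simp [cyc, h]

/-- Merge case: the orbit count drops by 1. -/
lemma cyc_mul_swap_of_not_sameCycle {σ : Equiv.Perm α} {z z' : α} (hzz' : z ≠ z')
    (hm : ¬ σ.SameCycle z z') : cyc (σ * Equiv.swap z z') = cyc σ - 1 := by
  set τ := σ * Equiv.swap z z' with hτ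
  set A := orb σ z with hA
  set B := orb σ z' with hB
  have hdisj : Disjoint A B := by
    rw [Finset.disjoint_left]
    intro a ha hb
    exact hm ((mem_orb.1 ha).trans (mem_orb.1 hb).symm)
  have hzA : z ∈ A := mem_orb.2 (Equiv.Perm.SameCycle.refl _ _)
  have hABne : ((A ∪ B).card : ℚ) ≠ 0 := by
    have : z ∈ A ∪ B := Finset.mem_union_left _ hzA
    have hpos : 0 < (A ∪ B).card := Finset.card_pos.2 ⟨z, this⟩
    exact_mod_cast hpos.ne'
  have horbin : ∀ x ∈ A ∪ B, orb τ x = A ∪ B := by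
    intro x hx
    rw [Finset.mem_union] at hx
    have hx' : σ.SameCycle x z ∨ σ.SameCycle x z' :=
      hx.imp (fun h => (mem_orb.1 h).symm) (fun h => (mem_orb.1 h).symm)
    ext y
    rw [mem_orb, Finset.mem_union, mem_orb, mem_orb, hτ, sameCycle_mul_swap_iff hzz' hm]
    constructor
    · rintro (h | ⟨_, hy⟩)
      · rcases hx' with h' | h'
        · exact Or.inl (h'.symm.trans h)
        · exact Or.inr (h'.symm.trans h)
      · exact hy.imp Equiv.Perm.SameCycle.symm Equiv.Perm.SameCycle.symm
    · intro hy
      exact Or.inr ⟨hx', hy.imp Equiv.Perm.SameCycle.symm Equiv.Perm.SameCycle.symm⟩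
  have horbout : ∀ x ∉ A ∪ B, orb τ x = orb σ x := by
    intro x hx
    rw [Finset.mem_union] at hx
    push_neg at hx
    obtain ⟨hx1, hx2⟩ := hx
    rw [mem_orb] at hx1 hx2
    ext y
    rw [mem_orb, mem_orb, hτ, sameCycle_mul_swap_iff hzz' hm]
    constructor
    · rintro (h | ⟨hx', _⟩)
      · exact h
      · rcases hx' with h' | h'
        · exact absurd h'.symm hx1
        · exact absurd h'.symm hx2
    · exact Or.inl
  have key : ∀ ρ : Equiv.Perm α,
      cyc ρ = ∑ x ∈ Finset.univ.filter (· ∈ A ∪ B), ((orb ρ x).card : ℚ)⁻¹ +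
        ∑ x ∈ Finset.univ.filter (¬ · ∈ A ∪ B), ((orb ρ x).card : ℚ)⁻¹ := by
    intro ρ
    rw [cyc, Finset.sum_filter_add_sum_filter_not]
  have hfilter : Finset.univ.filter (· ∈ A ∪ B) = A ∪ B := by
    ext y; simp
  have htail : ∑ x ∈ Finset.univ.filter (¬ · ∈ A ∪ B), ((orb τ x).card : ℚ)⁻¹ =
      ∑ x ∈ Finset.univ.filter (¬ · ∈ A ∪ B), ((orb σ x).card : ℚ)⁻¹ := by
    refine Finset.sum_congr rfl fun x hx => ?_
    rw [Finset.mem_filter] at hx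
    rw [horbout x hx.2]
  have hhead_τ : ∑ x ∈ A ∪ B, ((orb τ x).card : ℚ)⁻¹ = 1 := by
    rw [Finset.sum_congr rfl fun x hx => by rw [horbin x hx]]
    rw [Finset.sum_const, nsmul_eq_mul, mul_inv_cancel₀ hABne]
  have sum_one : ∀ (s : Finset α) (ρ : Equiv.Perm α), s.Nonempty → (∀ x ∈ s, orb ρ x = s) →
      ∑ x ∈ s, ((orb ρ x).card : ℚ)⁻¹ = 1 := by
    intro s ρ hne horb
    have hcard : (s.card : ℚ) ≠ 0 := by
      have := Finset.card_pos.2 hne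
      exact_mod_cast this.ne'
    rw [Finset.sum_congr rfl fun x hx => by rw [horb x hx]]
    rw [Finset.sum_const, nsmul_eq_mul, mul_inv_cancel₀ hcard]
  have hhead_σ : ∑ x ∈ A ∪ B, ((orb σ x).card : ℚ)⁻¹ = 2 := by
    rw [Finset.sum_union hdisj]
    have h1 : ∑ x ∈ A, ((orb σ x).card : ℚ)⁻¹ = 1 := by
      refine sum_one A σ ⟨z, hzA⟩ fun x hx => ?_
      rw [hA, ← orb_eq_of_sameCycle (mem_orb.1 hx)]
    have h2 : ∑ x ∈ B, ((orb σ x).card : ℚ)⁻¹ = 1 := by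
      refine sum_one B σ ⟨z', mem_orb.2 (Equiv.Perm.SameCycle.refl _ _)⟩ fun x hx => ?_
      rw [hB, ← orb_eq_of_sameCycle (mem_orb.1 hx)]
    rw [h1, h2]; norm_num
  have e1 := key τ
  have e2 := key σ
  rw [hfilter, hhead_τ, htail] at e1
  rw [hfilter, hhead_σ] at e2
  rw [e1, e2]; ring

/-- Split case: the orbit count goes up by 1. -/
lemma cyc_mul_swap_of_sameCycle {σ : Equiv.Perm α} {z z' : α} (hzz' : z ≠ z')
    (hs : σ.SameCycle z z') : cyc (σ * Equiv.swap z z') = cyc σ + 1 := by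
  have hnot := not_sameCycle_mul_swap σ hzz' hs
  have h := cyc_mul_swap_of_not_sameCycle hzz' hnot
  rw [mul_assoc, Equiv.swap_mul_self, mul_one] at h
  linarith

/-- Left multiplication by a transposition changes the orbit count by exactly one. -/
lemma cyc_swap_mul (ρ : Equiv.Perm α) {t : Equiv.Perm α} (ht : t.IsSwap) :
    cyc (t * ρ) = cyc ρ + 1 ∨ cyc (t * ρ) = cyc ρ - 1 := by
  obtain ⟨z, z', hzz', rfl⟩ := ht
  have h1 : cyc (Equiv.swap z z' * ρ) = cyc (ρ⁻¹ * Equiv.swap z z') := by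
    rw [← cyc_inv (ρ⁻¹ * Equiv.swap z z'), mul_inv_rev, Equiv.swap_inv, inv_inv]
  by_cases hsc : ρ⁻¹.SameCycle z z'
  · left
    rw [h1, cyc_mul_swap_of_sameCycle hzz' hsc, cyc_inv]
  · right
    rw [h1, cyc_mul_swap_of_not_sameCycle hzz' hsc, cyc_inv]


lemma exists_swap_list (σ : Equiv.Perm α) :
    ∃ l : List (Equiv.Perm α), (∀ t ∈ l, t.IsSwap) ∧ l.prod = σ ∧
      (l.length : ℚ) = Fintype.card α - cyc σ := by
  suffices H : ∀ (n : ℕ) (σ : Equiv.Perm α), σ.support.card = n →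
      ∃ l : List (Equiv.Perm α), (∀ t ∈ l, t.IsSwap) ∧ l.prod = σ ∧
        (l.length : ℚ) = Fintype.card α - cyc σ from H _ σ rfl
  intro n
  induction n using Nat.strong_induction_on with
  | _ n ih =>
    intro σ hn
    by_cases h1 : σ = 1
    · subst h1
      exact ⟨[], by simp, by simp, by rw [cyc_one]; simp⟩
    · obtain ⟨x, hx⟩ : ∃ x, σ x ≠ x := by
        by_contra hc; push_neg at hc; exact h1 (Equiv.ext hc)
      have hne : x ≠ σ x := fun h => hx h.symm
      set t := Equiv.swap x (σ x) with ht
      have hlt : (t * σ).support.card < n := hn ▸ Equiv.Perm.card_support_swap_mul hx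
      obtain ⟨l, hl1, hl2, hl3⟩ := ih _ hlt (t * σ) rfl
      have hcyc : cyc (t * σ) = cyc σ + 1 := by
        have he : cyc (t * σ) = cyc (σ⁻¹ * t) := by
          rw [← cyc_inv (σ⁻¹ * t), mul_inv_rev, ht, Equiv.swap_inv, inv_inv]
        have hsc : σ⁻¹.SameCycle x (σ x) :=
          (Equiv.Perm.sameCycle_inv).2 ⟨1, by simp⟩
        rw [he, ht, cyc_mul_swap_of_sameCycle hne hsc, cyc_inv]
      refine ⟨t :: l, ?_, ?_, ?_⟩
      · intro s hs
        rcases List.mem_cons.1 hs with rfl | hs'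
        · exact ⟨x, σ x, hne, rfl⟩
        · exact hl1 s hs'
      · rw [List.prod_cons, hl2, ← mul_assoc, ht, Equiv.swap_mul_self, one_mul]
      · rw [List.length_cons]
        push_cast
        rw [hl3, hcyc]
        ring

lemma list_lower (l : List (Equiv.Perm α)) (hl : ∀ t ∈ l, t.IsSwap) :
    (Fintype.card α : ℚ) - cyc l.prod ≤ l.length := by
  induction l with
  | nil => simp [cyc_one]
  | cons t l ih =>
    have hih := ih fun s hs => hl s (List.mem_cons_of_mem _ hs)
    rw [List.prod_cons, List.length_cons]
    push_cast
    rcases cyc_swap_mul l.prod (hl t List.mem_cons_self) with h | h <;>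
      rw [h] <;> linarith

lemma swapLength_eq_card_sub_cyc (σ : Equiv.Perm α) :
    (swapLength σ : ℚ) = Fintype.card α - cyc σ := by
  obtain ⟨l, hl1, hl2, hl3⟩ := exists_swap_list σ
  have hmem : l.length ∈
      {n | ∃ l' : List (Equiv.Perm α), l'.length = n ∧ (∀ t ∈ l', t.IsSwap) ∧ l'.prod = σ} :=
    ⟨l, rfl, hl1, hl2⟩
  have hlb : ∀ n ∈
      {n | ∃ l' : List (Equiv.Perm α), l'.length = n ∧ (∀ t ∈ l', t.IsSwap) ∧ l'.prod = σ},
      l.length ≤ n := by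
    rintro n ⟨l', rfl, hl1', hl2'⟩
    have h := list_lower l' hl1'
    rw [hl2', ← hl3] at h
    exact_mod_cast h
  have heq : swapLength σ = l.length :=
    le_antisymm (Nat.sInf_le hmem) (le_csInf ⟨_, hmem⟩ hlb)
  rw [heq, hl3]

end SwapLengthAux

/-- Multiplying by a transposition `(z, z')` decreases the minimal transposition
length by one if `z, z'` are in the same orbit, and increases it by one otherwise. -/
theorem swapLength_mul_swap {α : Type*} [DecidableEq α] [Fintype α] (σ : Equiv.Perm α)
    (z z' : α) (hzz' : z ≠ z') :
    (σ.SameCycle z z' → swapLength (σ * Equiv.swap z z') = swapLength σ - 1) ∧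
    (¬ σ.SameCycle z z' → swapLength (σ * Equiv.swap z z') = swapLength σ + 1) := by
  have e1 := SwapLengthAux.swapLength_eq_card_sub_cyc (σ * Equiv.swap z z')
  have e2 := SwapLengthAux.swapLength_eq_card_sub_cyc σ
  constructor
  · intro h
    have hc := SwapLengthAux.cyc_mul_swap_of_sameCycle hzz' h
    have hq : (swapLength (σ * Equiv.swap z z') : ℚ) + 1 = swapLength σ := by
      rw [e1, e2, hc]; ring
    have hnat : swapLength (σ * Equiv.swap z z') + 1 = swapLength σ := by exact_mod_cast hq
    omega
  · intro h
    have hc := SwapLengthAux.cyc_mul_swap_of_not_sameCycle hzz' h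
    have hq : (swapLength (σ * Equiv.swap z z') : ℚ) = swapLength σ + 1 := by
      rw [e1, e2, hc]; ring
    exact_mod_cast hq
end

section
/- Let σ be a permutation of a finite set x and let t₁t₂⋯t_{|σ|} be a reduced decomposition of σ into transpositions (reduced meaning the number of factors equals the minimal transposition length |σ|). Then for each i, if t_i = (z, z'), the points z and z' belong to the same orbit of σ. -/
namespace SwapLengthAux

open Equiv Equiv.Perm

variable {α : Type*} [DecidableEq α] [Fintype α]

/-- The same-cycle setoid of a permutation. -/
def sc (σ : Equiv.Perm α) : Setoid α :=
  ⟨σ.SameCycle, ⟨fun x => Equiv.Perm.SameCycle.refl σ x, fun h => h.symm, fun h h' => h.trans h'⟩⟩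

/-- The number of orbits of a permutation. -/
noncomputable def cc (σ : Equiv.Perm α) : ℕ := Nat.card (Quotient (sc σ))

section SetoidLemmas

variable {r s : Setoid α}

/-- The canonical map between quotients when `r ≤ s`. -/
def qmap (h : ∀ x y, r.r x y → s.r x y) : Quotient r → Quotient s :=
  Quotient.map' id (fun x y hxy => h x y hxy)

theorem qmap_mk (h : ∀ x y, r.r x y → s.r x y) (x : α) :
    qmap h (Quotient.mk r x) = Quotient.mk s x := rfl

theorem qmap_surjective (h : ∀ x y, r.r x y → s.r x y) : Function.Surjective (qmap h) := by
  intro q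
  obtain ⟨x, rfl⟩ := Quotient.exists_rep q
  exact ⟨Quotient.mk r x, rfl⟩

theorem card_quot_le (h : ∀ x y, r.r x y → s.r x y) :
    Nat.card (Quotient s) ≤ Nat.card (Quotient r) :=
  Nat.card_le_card_of_surjective _ (qmap_surjective h)

theorem card_quot_lt (h : ∀ x y, r.r x y → s.r x y) {u v : α}
    (hs : s.r u v) (hr : ¬ r.r u v) :
    Nat.card (Quotient s) < Nat.card (Quotient r) := by
  refine lt_of_le_of_ne (card_quot_le h) fun hcard => ?_
  have hbij : Function.Bijective (qmap h) :=
    (Nat.bijective_iff_surjective_and_card _).2 ⟨qmap_surjective h, hcard.symm⟩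
  have h1 : qmap h (Quotient.mk r u) = qmap h (Quotient.mk r v) := by
    rw [qmap_mk, qmap_mk]
    exact Quotient.sound' hs
  exact hr (Quotient.exact' (hbij.injective h1))

theorem rel_of_card_quot_eq (h : ∀ x y, r.r x y → s.r x y)
    (hcard : Nat.card (Quotient s) = Nat.card (Quotient r)) {u v : α} (hs : s.r u v) :
    r.r u v := by
  have hbij : Function.Bijective (qmap h) :=
    (Nat.bijective_iff_surjective_and_card _).2 ⟨qmap_surjective h, hcard.symm⟩
  have h1 : qmap h (Quotient.mk r u) = qmap h (Quotient.mk r v) := by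
    rw [qmap_mk, qmap_mk]
    exact Quotient.sound' hs
  exact Quotient.exact' (hbij.injective h1)

/-- The setoid obtained from `r` by merging the classes of `a` and `b`. -/
def joinPair (r : Setoid α) (a b : α) : Setoid α where
  r x y := r.r x y ∨ (r.r x a ∧ r.r b y) ∨ (r.r x b ∧ r.r a y)
  iseqv := by
    constructor
    · intro x; exact Or.inl (r.refl x)
    · rintro x y (h | ⟨h1, h2⟩ | ⟨h1, h2⟩)
      · exact Or.inl (r.symm h)
      · exact Or.inr (Or.inr ⟨r.symm h2, r.symm h1⟩)
      · exact Or.inr (Or.inl ⟨r.symm h2, r.symm h1⟩)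
    · rintro x y z (h | ⟨h1, h2⟩ | ⟨h1, h2⟩) (h' | ⟨h1', h2'⟩ | ⟨h1', h2'⟩)
      · exact Or.inl (r.trans h h')
      · exact Or.inr (Or.inl ⟨r.trans h h1', h2'⟩)
      · exact Or.inr (Or.inr ⟨r.trans h h1', h2'⟩)
      · exact Or.inr (Or.inl ⟨h1, r.trans h2 h'⟩)
      · exact Or.inl (r.trans h1 (r.trans (r.symm (r.trans h2 h1')) h2'))
      · exact Or.inl (r.trans h1 h2')
      · exact Or.inr (Or.inr ⟨h1, r.trans h2 h'⟩)
      · exact Or.inl (r.trans h1 h2')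
      · exact Or.inl (r.trans h1 (r.trans (r.symm (r.trans h2 h1')) h2'))

theorem le_joinPair (a b : α) : ∀ x y, r.r x y → (joinPair r a b).r x y :=
  fun _ _ h => Or.inl h

theorem joinPair_rel_self (a b : α) : (joinPair r a b).r a b :=
  Or.inr (Or.inl ⟨r.refl a, r.refl b⟩)

theorem card_quot_le_joinPair_add_one (a b : α) :
    Nat.card (Quotient r) ≤ Nat.card (Quotient (joinPair r a b)) + 1 := by
  classical
  haveI : Fintype (Quotient r) := Fintype.ofFinite _
  haveI : Fintype (Quotient (joinPair r a b)) := Fintype.ofFinite _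
  set φ : Quotient r → Quotient (joinPair r a b) := qmap (le_joinPair a b) with hφ
  have hinj : Function.Injective
      (fun c : {c : Quotient r // c ≠ Quotient.mk r a} => φ c.1) := by
    rintro ⟨c, hc⟩ ⟨d, hd⟩ hcd
    obtain ⟨x, rfl⟩ := Quotient.exists_rep c
    obtain ⟨y, rfl⟩ := Quotient.exists_rep d
    simp only [hφ, qmap_mk] at hcd
    have hxa : ¬ r.r x a := fun h => hc (Quotient.sound' h)
    have hya : ¬ r.r y a := fun h => hd (Quotient.sound' h)
    have := Quotient.exact' hcd
    rcases this with h | ⟨h1, h2⟩ | ⟨h1, h2⟩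
    · exact Subtype.ext (Quotient.sound' h)
    · exact absurd h1 hxa
    · exact absurd (r.symm h2) hya
  have h1 : Nat.card {c : Quotient r // c ≠ Quotient.mk r a}
      ≤ Nat.card (Quotient (joinPair r a b)) :=
    Nat.card_le_card_of_injective _ hinj
  have h2 : Nat.card {c : Quotient r // c ≠ Quotient.mk r a}
      = Nat.card (Quotient r) - 1 := by
    rw [Nat.card_eq_fintype_card, Nat.card_eq_fintype_card]
    have := Fintype.card_subtype_compl (fun c : Quotient r => c = Quotient.mk r a)
    simpa [Fintype.card_subtype_eq] using this
  have h3 : 1 ≤ Nat.card (Quotient r) :=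
    Nat.one_le_iff_ne_zero.2 (Nat.card_ne_zero.2 ⟨⟨Quotient.mk r a⟩, inferInstance⟩)
  omega

end SetoidLemmas

theorem sameCycle_le_of_forall {r : Setoid α} {h : Equiv.Perm α}
    (H : ∀ x, r.r x (h x)) {x y : α} (hxy : h.SameCycle x y) : r.r x y := by
  have key : ∀ (n : ℕ) (x : α), r.r x ((h ^ n) x) := by
    intro n
    induction n with
    | zero => intro x; simpa using r.refl x
    | succ n ih =>
      intro x
      have : (h ^ (n + 1)) x = (h ^ n) (h x) := by
        rw [pow_succ]
        simp [Equiv.Perm.mul_apply]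
      rw [this]
      exact r.trans (H x) (ih (h x))
  obtain ⟨i, _, hi⟩ := hxy.exists_pow_eq'
  rw [← hi]
  exact key i x

theorem sameCycle_swap_mul_le {σ : Equiv.Perm α} {a b : α} (hab : σ.SameCycle a b)
    {x y : α} (hxy : (Equiv.swap a b * σ).SameCycle x y) : σ.SameCycle x y := by
  refine sameCycle_le_of_forall (r := sc σ) (fun x => ?_) hxy
  show σ.SameCycle x (Equiv.swap a b (σ x))
  have hx : σ.SameCycle x (σ x) := ⟨1, by simp⟩
  rcases eq_or_ne (σ x) a with h | h
  · rw [h, Equiv.swap_apply_left]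
    exact (h ▸ hx).trans hab
  rcases eq_or_ne (σ x) b with h' | h'
  · rw [h', Equiv.swap_apply_right]
    exact (h' ▸ hx).trans hab.symm
  · rw [Equiv.swap_apply_of_ne_of_ne h h']
    exact hx

theorem sameCycle_swap_mul_le_join (σ : Equiv.Perm α) (a b : α)
    {x y : α} (hxy : (Equiv.swap a b * σ).SameCycle x y) :
    (joinPair (sc σ) a b).r x y := by
  refine sameCycle_le_of_forall (fun x => ?_) hxy
  show (joinPair (sc σ) a b).r x (Equiv.swap a b (σ x))
  have hx : σ.SameCycle x (σ x) := ⟨1, by simp⟩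
  rcases eq_or_ne (σ x) a with h | h
  · rw [h, Equiv.swap_apply_left]
    exact Or.inr (Or.inl ⟨h ▸ hx, Equiv.Perm.SameCycle.refl σ b⟩)
  rcases eq_or_ne (σ x) b with h' | h'
  · rw [h', Equiv.swap_apply_right]
    exact Or.inr (Or.inr ⟨h' ▸ hx, Equiv.Perm.SameCycle.refl σ a⟩)
  · rw [Equiv.swap_apply_of_ne_of_ne h h']
    exact Or.inl hx

theorem cc_one : cc (1 : Equiv.Perm α) = Fintype.card α := by
  have hbij : Function.Bijective (Quotient.mk (sc (1 : Equiv.Perm α))) := by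
    constructor
    · intro x y hxy
      have := Quotient.exact' hxy
      exact Equiv.Perm.sameCycle_one.1 this
    · intro q; exact Quotient.exists_rep q
  rw [cc, ← Nat.card_eq_of_bijective _ hbij, Nat.card_eq_fintype_card]

theorem cc_le_cc_swap_mul_add_one (σ : Equiv.Perm α) (a b : α) :
    cc σ ≤ cc (Equiv.swap a b * σ) + 1 := by
  have h1 : Nat.card (Quotient (joinPair (sc σ) a b))
      ≤ cc (Equiv.swap a b * σ) :=
    card_quot_le (r := sc (Equiv.swap a b * σ)) (s := joinPair (sc σ) a b)
      (fun x y hxy => sameCycle_swap_mul_le_join σ a b hxy)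
  have h2 := card_quot_le_joinPair_add_one (r := sc σ) a b
  unfold cc at *
  omega

theorem chain : ∀ l : List (Equiv.Perm α), (∀ t ∈ l, Equiv.Perm.IsSwap t) →
    Fintype.card α ≤ cc l.prod + l.length := by
  intro l
  induction l with
  | nil => intro _; simp [cc_one]
  | cons t l ih =>
    intro hsw
    obtain ⟨a, b, _, rfl⟩ := hsw t List.mem_cons_self
    have h1 := ih (fun t ht => hsw t (List.mem_cons_of_mem _ ht))
    have h2 := cc_le_cc_swap_mul_add_one l.prod a b
    simp only [List.prod_cons, List.length_cons]
    omega

theorem swapLength_le {σ : Equiv.Perm α} (l : List (Equiv.Perm α))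
    (hsw : ∀ t ∈ l, Equiv.Perm.IsSwap t) (hp : l.prod = σ) : swapLength σ ≤ l.length :=
  Nat.sInf_le ⟨l, rfl, hsw, hp⟩

theorem swapLength_spec (σ : Equiv.Perm α) :
    ∃ l : List (Equiv.Perm α), l.length = swapLength σ ∧
      (∀ t ∈ l, Equiv.Perm.IsSwap t) ∧ l.prod = σ := by
  have hne : {n | ∃ l : List (Equiv.Perm α), l.length = n ∧
      (∀ t ∈ l, t.IsSwap) ∧ l.prod = σ}.Nonempty := by
    obtain ⟨l, hl1, hl2⟩ := (Equiv.Perm.truncSwapFactors σ).out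
    exact ⟨l.length, l, rfl, hl2, hl1⟩
  exact Nat.sInf_mem hne

theorem swapLength_swap_mul_le (σ : Equiv.Perm α) (a b : α) (hab : a ≠ b) :
    swapLength (Equiv.swap a b * σ) ≤ swapLength σ + 1 := by
  obtain ⟨l, hlen, hsw, hp⟩ := swapLength_spec σ
  have : swapLength (Equiv.swap a b * σ) ≤ (Equiv.swap a b :: l).length := by
    refine swapLength_le _ ?_ ?_
    · rintro t ht
      rcases List.mem_cons.1 ht with rfl | ht
      · exact ⟨a, b, hab, rfl⟩
      · exact hsw t ht
    · rw [List.prod_cons, hp]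
  simpa [hlen] using this

theorem ub : ∀ (n : ℕ) (σ : Equiv.Perm α), σ.support.card ≤ n →
    swapLength σ + cc σ ≤ Fintype.card α := by
  intro n
  induction n with
  | zero =>
    intro σ hσ
    have h1 : σ = 1 := by
      rw [← Equiv.Perm.support_eq_empty_iff]
      exact Finset.card_eq_zero.1 (Nat.le_zero.1 hσ)
    subst h1
    have h2 : swapLength (1 : Equiv.Perm α) = 0 := by
      refine Nat.le_zero.1 ?_
      have := swapLength_le (σ := (1 : Equiv.Perm α)) ([] : List (Equiv.Perm α))
        (by simp) (by simp)
      simpa using this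
    rw [h2, cc_one]
    omega
  | succ n ih =>
    intro σ hσ
    rcases eq_or_ne σ 1 with rfl | hσ1
    · have h2 : swapLength (1 : Equiv.Perm α) = 0 := by
        refine Nat.le_zero.1 ?_
        have := swapLength_le (σ := (1 : Equiv.Perm α)) ([] : List (Equiv.Perm α))
          (by simp) (by simp)
        simpa using this
      rw [h2, cc_one]
      omega
    · obtain ⟨a, ha⟩ : ∃ a, σ a ≠ a := by
        by_contra h
        push_neg at h
        exact hσ1 (Equiv.ext h)
      set σ' := Equiv.swap a (σ a) * σ with hσ'
      have hsupp : σ'.support.card < σ.support.card :=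
        Equiv.Perm.card_support_swap_mul ha
      have hIH := ih σ' (by omega)
      -- swapLength σ ≤ swapLength σ' + 1
      have hsl : swapLength σ ≤ swapLength σ' + 1 := by
        have h1 : Equiv.swap a (σ a) * σ' = σ := by
          rw [hσ', ← mul_assoc, Equiv.swap_mul_self, one_mul]
        have := swapLength_swap_mul_le σ' a (σ a) (Ne.symm ha)
        rwa [h1] at this
      -- cc σ + 1 ≤ cc σ'
      have hcc : cc σ + 1 ≤ cc σ' := by
        have hfix : σ' a = a := by
          rw [hσ']
          simp [Equiv.Perm.mul_apply, Equiv.swap_apply_right]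
        have hle : ∀ x y, (sc σ').r x y → (sc σ).r x y := fun x y hxy =>
          sameCycle_swap_mul_le (σ := σ) (a := a) (b := σ a) ⟨1, by simp⟩ hxy
        have hpair : (sc σ).r a (σ a) := ⟨1, by simp⟩
        have hnpair : ¬ (sc σ').r a (σ a) := by
          rintro ⟨k, hk⟩
          rw [Equiv.Perm.zpow_apply_eq_self_of_apply_eq_self hfix k] at hk
          exact ha hk.symm
        exact card_quot_lt hle hpair hnpair
      omega

/-- The key forced-merge lemma: if multiplying by a swap strictly decreases the
number of orbits, then the swapped points are in the same cycle of the product,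
and the same-cycle relation grows. -/
theorem step_merge {P : Equiv.Perm α} {a b : α}
    (hlt : cc (Equiv.swap a b * P) < cc P) :
    (Equiv.swap a b * P).SameCycle a b := by
  by_contra hq
  by_cases hp : P.SameCycle a b
  · have hle : ∀ x y, (sc (Equiv.swap a b * P)).r x y → (sc P).r x y := fun x y hxy =>
      sameCycle_swap_mul_le hp hxy
    have := card_quot_lt hle (hp : (sc P).r a b) hq
    unfold cc at hlt
    omega
  · set r' := joinPair (sc P) a b with hr'
    have h1 : Nat.card (Quotient r') < cc P :=
      card_quot_lt (le_joinPair a b) (joinPair_rel_self a b) hp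
    have h2 : cc P ≤ Nat.card (Quotient r') + 1 := card_quot_le_joinPair_add_one a b
    have h3 : Nat.card (Quotient r') ≤ cc (Equiv.swap a b * P) :=
      card_quot_le (r := sc (Equiv.swap a b * P)) (s := r')
        (fun x y (hxy : (Equiv.swap a b * P).SameCycle x y) =>
          sameCycle_swap_mul_le_join P a b hxy)
    have heq : Nat.card (Quotient r') = Nat.card (Quotient (sc (Equiv.swap a b * P))) := by
      unfold cc at *; omega
    exact hq (rel_of_card_quot_eq (r := sc (Equiv.swap a b * P)) (s := r')
      (fun x y (hxy : (Equiv.swap a b * P).SameCycle x y) =>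
        sameCycle_swap_mul_le_join P a b hxy) heq
      (joinPair_rel_self a b))

theorem step_merge_le {P : Equiv.Perm α} {a b : α}
    (hlt : cc (Equiv.swap a b * P) < cc P) {x y : α}
    (hxy : P.SameCycle x y) : (Equiv.swap a b * P).SameCycle x y := by
  have h1 := step_merge hlt
  have h2 : Equiv.swap a b * (Equiv.swap a b * P) = P := by
    rw [← mul_assoc, Equiv.swap_mul_self, one_mul]
  exact sameCycle_swap_mul_le (σ := Equiv.swap a b * P) h1 (by rwa [h2])

theorem propagate : ∀ (l1 m : List (Equiv.Perm α)),
    (∀ t ∈ l1 ++ m, Equiv.Perm.IsSwap t) →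
    cc ((l1 ++ m).prod) + (l1 ++ m).length ≤ Fintype.card α →
    ∀ x y, (m.prod).SameCycle x y → ((l1 ++ m).prod).SameCycle x y := by
  intro l1
  induction l1 with
  | nil => intro m _ _ x y h; simpa using h
  | cons t l1 ih =>
    intro m hsw htight x y hxy
    obtain ⟨a, b, _, rfl⟩ := hsw t List.mem_cons_self
    have hsw' : ∀ t ∈ l1 ++ m, Equiv.Perm.IsSwap t :=
      fun t ht => hsw t (List.mem_cons_of_mem _ ht)
    have hchain : Fintype.card α ≤ cc (l1 ++ m).prod + (l1 ++ m).length := chain _ hsw'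
    have htight' : cc (Equiv.swap a b * (l1 ++ m).prod) + ((l1 ++ m).length + 1)
        ≤ Fintype.card α := by
      rw [List.cons_append, List.prod_cons, List.length_cons] at htight
      exact htight
    have hlt : cc (Equiv.swap a b * (l1 ++ m).prod) < cc (l1 ++ m).prod := by omega
    have htightQ : cc (l1 ++ m).prod + (l1 ++ m).length ≤ Fintype.card α := by
      have := cc_le_cc_swap_mul_add_one (l1 ++ m).prod a b
      omega
    have hQxy : (l1 ++ m).prod.SameCycle x y := ih m hsw' htightQ x y hxy
    have hfin : (Equiv.swap a b * (l1 ++ m).prod).SameCycle x y := step_merge_le hlt hQxy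
    rw [List.cons_append, List.prod_cons]
    exact hfin

theorem tail_tight : ∀ (l1 m : List (Equiv.Perm α)),
    (∀ t ∈ l1 ++ m, Equiv.Perm.IsSwap t) →
    cc ((l1 ++ m).prod) + (l1 ++ m).length ≤ Fintype.card α →
    cc m.prod + m.length ≤ Fintype.card α := by
  intro l1
  induction l1 with
  | nil => intro m _ h; simpa using h
  | cons t l1 ih =>
    intro m hsw htight
    obtain ⟨a, b, _, rfl⟩ := hsw t List.mem_cons_self
    have hsw' : ∀ t ∈ l1 ++ m, Equiv.Perm.IsSwap t :=
      fun t ht => hsw t (List.mem_cons_of_mem _ ht)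
    have h1 : cc ((l1 ++ m).prod) ≤ cc (Equiv.swap a b * (l1 ++ m).prod) + 1 :=
      cc_le_cc_swap_mul_add_one _ a b
    have h2 : cc (Equiv.swap a b * (l1 ++ m).prod)
        + ((l1 ++ m).length + 1) ≤ Fintype.card α := by
      rw [List.cons_append, List.prod_cons, List.length_cons] at htight
      exact htight
    exact ih m hsw' (by omega)

end SwapLengthAux

/-- In a reduced decomposition of `σ` into transpositions, every transposition
`(z, z')` occurring in the decomposition has `z` and `z'` in the same orbit of `σ`. -/
theorem sameCycle_of_mem_reduced {α : Type*} [DecidableEq α] [Fintype α] (σ : Equiv.Perm α)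
    (l : List (Equiv.Perm α)) (hswap : ∀ t ∈ l, t.IsSwap) (hprod : l.prod = σ)
    (hred : l.length = swapLength σ) (z z' : α) (hzz' : z ≠ z')
    (hmem : Equiv.swap z z' ∈ l) : σ.SameCycle z z' := by
  classical
  subst hprod
  obtain ⟨l1, l2, rfl⟩ := List.append_of_mem hmem
  set m := Equiv.swap z z' :: l2 with hm
  -- global tightness
  have hub := SwapLengthAux.ub (α := α) ((l1 ++ m).prod.support.card) (l1 ++ m).prod le_rfl
  have htight : SwapLengthAux.cc (l1 ++ m).prod + (l1 ++ m).length ≤ Fintype.card α := by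
    omega
  -- tail tightness
  have htail : SwapLengthAux.cc m.prod + m.length ≤ Fintype.card α :=
    SwapLengthAux.tail_tight l1 m hswap htight
  -- the swap step is a forced merge
  have hchain2 : Fintype.card α ≤ SwapLengthAux.cc l2.prod + l2.length :=
    SwapLengthAux.chain l2 (fun t ht =>
      hswap t (by simp [hm, List.mem_append, ht]))
  have hm_prod : m.prod = Equiv.swap z z' * l2.prod := by rw [hm, List.prod_cons]
  have hmlen : m.length = l2.length + 1 := by rw [hm, List.length_cons]
  have hlt : SwapLengthAux.cc (Equiv.swap z z' * l2.prod) < SwapLengthAux.cc l2.prod := by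
    rw [hm_prod, hmlen] at htail
    omega
  have hstep : (Equiv.swap z z' * l2.prod).SameCycle z z' := SwapLengthAux.step_merge hlt
  have hstep' : (m.prod).SameCycle z z' := by rwa [hm_prod]
  exact SwapLengthAux.propagate l1 m hswap htight z z' hstep'
end

section
/- Let σ be a permutation of a finite set x with orbit partition λ, and let t₁⋯t_{|σ|} be a reduced decomposition of σ into transpositions. For each i, let λ_i be the orbit partition of the partial product t₁⋯t_i. Then λ_i refines λ (every orbit of t₁⋯t_i is contained in an orbit of σ). -/
set_option linter.unusedSectionVars false
set_option linter.unusedVariables false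
set_option maxHeartbeats 1000000

open Equiv Equiv.Perm Finset

namespace SwapProofAux

variable {α : Type*} [DecidableEq α] [Fintype α]

lemma sameCycle_of_pow {π : Equiv.Perm α} {z w : α} (k : ℕ) (h : (π ^ k) z = w) :
    π.SameCycle z w := ⟨(k : ℤ), by simpa [zpow_natCast] using h⟩

lemma exists_nat_pow {π : Equiv.Perm α} {z w : α} (h : π.SameCycle z w) :
    ∃ k : ℕ, (π ^ k) z = w := by
  obtain ⟨i, _, h⟩ := h.exists_pow_eq'
  exact ⟨i, h⟩

lemma pow_mul_fix {π : Equiv.Perm α} {x : α} {k : ℕ} (h : (π ^ k) x = x) (q : ℕ) :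
    (π ^ (k * q)) x = x := by
  induction q with
  | zero => simp
  | succ q ih => rw [Nat.mul_succ, pow_add, Equiv.Perm.mul_apply, h, ih]

lemma pow_mod_fix {π : Equiv.Perm α} {x : α} {k : ℕ} (h : (π ^ k) x = x) (t : ℕ) :
    (π ^ t) x = (π ^ (t % k)) x := by
  conv_lhs => rw [← Nat.div_add_mod t k]
  rw [add_comm, pow_add, Equiv.Perm.mul_apply, pow_mul_fix h]

lemma key_pow {π : Equiv.Perm α} {a b : α} (hab : a ≠ b)
    (m : ℕ) (hm : ∀ i, 1 ≤ i → i ≤ m → (π ^ i) b ≠ a ∧ (π ^ i) b ≠ b) :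
    ∀ j ≤ m, ((π * Equiv.swap a b) ^ (j + 1)) a = (π ^ (j + 1)) b := by
  intro j
  induction j with
  | zero => intro _; simp [Equiv.Perm.mul_apply]
  | succ j ih =>
    intro hj
    have hij := ih (Nat.le_of_succ_le hj)
    have hne := hm (j + 1) (Nat.le_add_left 1 j) hj
    rw [pow_succ' (π * Equiv.swap a b) (j + 1), Equiv.Perm.mul_apply, hij,
      Equiv.Perm.mul_apply, Equiv.swap_apply_of_ne_of_ne hne.1 hne.2,
      ← Equiv.Perm.mul_apply, ← pow_succ']

lemma merge_sameCycle {π : Equiv.Perm α} {a b : α} (hab : a ≠ b) (h : ¬ π.SameCycle a b) :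
    (π * Equiv.swap a b).SameCycle a b := by
  have hex : ∃ j : ℕ, (π ^ (j + 1)) b = b := by
    refine ⟨orderOf π - 1, ?_⟩
    have h1 : 0 < orderOf π := orderOf_pos π
    rw [Nat.sub_add_cancel h1, pow_orderOf_eq_one]; rfl
  set m := Nat.find hex with hmdef
  have hm : ∀ i, 1 ≤ i → i ≤ m → (π ^ i) b ≠ a ∧ (π ^ i) b ≠ b := by
    intro i h1 h2
    constructor
    · intro hia
      exact h (sameCycle_of_pow (z := b) i hia).symm
    · intro hib
      have : i - 1 < m := by omega
      have := Nat.find_min hex this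
      rw [Nat.sub_add_cancel h1] at this
      exact this hib
  have hfin := key_pow hab m hm m le_rfl
  rw [Nat.find_spec hex] at hfin
  exact sameCycle_of_pow (m + 1) hfin

lemma merge_step {π : Equiv.Perm α} {a b : α} (hab : a ≠ b)
    (hab' : (π * Equiv.swap a b).SameCycle a b) (w : α) :
    (π * Equiv.swap a b).SameCycle w (π w) := by
  by_cases hwa : w = a
  · rw [hwa]
    have : (π * Equiv.swap a b) b = π a := by
      rw [Equiv.Perm.mul_apply, Equiv.swap_apply_right]
    exact hab'.trans (sameCycle_of_pow 1 (by simpa using this))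
  · by_cases hwb : w = b
    · rw [hwb]
      have : (π * Equiv.swap a b) a = π b := by
        rw [Equiv.Perm.mul_apply, Equiv.swap_apply_left]
      exact hab'.symm.trans (sameCycle_of_pow 1 (by simpa using this))
    · refine sameCycle_of_pow 1 ?_
      simp only [pow_one, Equiv.Perm.mul_apply, Equiv.swap_apply_of_ne_of_ne hwa hwb]

lemma merge_mono {π : Equiv.Perm α} {a b : α} (hab : a ≠ b) (h : ¬ π.SameCycle a b) :
    ∀ z w, π.SameCycle z w → (π * Equiv.swap a b).SameCycle z w := by
  have hab' := merge_sameCycle hab h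
  have main : ∀ (k : ℕ) (z : α), (π * Equiv.swap a b).SameCycle z ((π ^ k) z) := by
    intro k
    induction k with
    | zero => intro z; simp [Equiv.Perm.SameCycle.refl]
    | succ k ih =>
      intro z
      have h2 := merge_step hab hab' ((π ^ k) z)
      rw [← Equiv.Perm.mul_apply, ← pow_succ'] at h2
      exact (ih z).trans h2
  intro z w hzw
  obtain ⟨k, rfl⟩ := exists_nat_pow hzw
  exact main k z

lemma mul_swap_cases {π : Equiv.Perm α} {a b : α} (hab : a ≠ b) {z w : α}
    (h : (π * Equiv.swap a b).SameCycle z w) :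
    π.SameCycle z w ∨ (π.SameCycle z a ∧ π.SameCycle w b) ∨
      (π.SameCycle z b ∧ π.SameCycle w a) := by
  obtain ⟨k, rfl⟩ := exists_nat_pow h
  clear h
  induction k with
  | zero => left; simp [Equiv.Perm.SameCycle.refl]
  | succ k ih =>
    set w := ((π * Equiv.swap a b) ^ k) z with hw
    have hstep : ((π * Equiv.swap a b) ^ (k + 1)) z = π (Equiv.swap a b w) := by
      rw [pow_succ', Equiv.Perm.mul_apply, Equiv.Perm.mul_apply]
    by_cases hwa : w = a
    · rw [hstep, hwa, Equiv.swap_apply_left]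
      have hpb : π.SameCycle (π b) b := (sameCycle_of_pow 1 (by simp)).symm
      rcases ih with h1 | ⟨h1, h2⟩ | ⟨h1, h2⟩
      · right; left; exact ⟨hwa ▸ h1, hpb⟩
      · right; left; exact ⟨h1, hpb⟩
      · left; exact h1.trans hpb.symm
    · by_cases hwb : w = b
      · rw [hstep, hwb, Equiv.swap_apply_right]
        have hpa : π.SameCycle (π a) a := (sameCycle_of_pow 1 (by simp)).symm
        rcases ih with h1 | ⟨h1, h2⟩ | ⟨h1, h2⟩
        · right; right; exact ⟨hwb ▸ h1, hpa⟩
        · left; exact h1.trans hpa.symm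
        · right; right; exact ⟨h1, hpa⟩
      · rw [hstep, Equiv.swap_apply_of_ne_of_ne hwa hwb]
        have hpw : π.SameCycle w (π w) := sameCycle_of_pow 1 (by simp)
        rcases ih with h1 | ⟨h1, h2⟩ | ⟨h1, h2⟩
        · left; exact h1.trans hpw
        · right; left; exact ⟨h1, hpw.symm.trans h2⟩
        · right; right; exact ⟨h1, hpw.symm.trans h2⟩

lemma split_not_sameCycle {π : Equiv.Perm α} {a b : α} (hab : a ≠ b)
    (h : π.SameCycle a b) : ¬ (π * Equiv.swap a b).SameCycle a b := by
  have hex : ∃ j : ℕ, (π ^ (j + 1)) b = a ∨ (π ^ (j + 1)) b = b := by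
    refine ⟨orderOf π - 1, Or.inr ?_⟩
    have h1 : 0 < orderOf π := orderOf_pos π
    rw [Nat.sub_add_cancel h1, pow_orderOf_eq_one]; rfl
  set m := Nat.find hex with hmdef
  have hm : ∀ i, 1 ≤ i → i ≤ m → (π ^ i) b ≠ a ∧ (π ^ i) b ≠ b := by
    intro i h1 h2
    have hlt : i - 1 < m := by omega
    have := Nat.find_min hex hlt
    rw [Nat.sub_add_cancel h1] at this
    push_neg at this
    exact this
  have hkey := key_pow hab m hm
  have hA : (π ^ (m + 1)) b = a := by
    rcases Nat.find_spec hex with h1 | h1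
    · exact h1
    · exfalso
      obtain ⟨t, ht⟩ := exists_nat_pow h.symm
      rw [pow_mod_fix h1 t] at ht
      set r := t % (m + 1) with hr
      have hrlt : r < m + 1 := Nat.mod_lt _ (Nat.succ_pos m)
      rcases Nat.eq_zero_or_pos r with h0 | h0
      · rw [h0] at ht; simp at ht; exact hab ht.symm
      · exact (hm r h0 (by omega)).1 ht
  have hfix : ((π * Equiv.swap a b) ^ (m + 1)) a = a := by
    rw [hkey m le_rfl, hA]
  intro hcon
  obtain ⟨t, ht⟩ := exists_nat_pow hcon
  rw [pow_mod_fix hfix t] at ht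
  set r := t % (m + 1) with hr
  have hrlt : r < m + 1 := Nat.mod_lt _ (Nat.succ_pos m)
  rcases Nat.eq_zero_or_pos r with h0 | h0
  · rw [h0] at ht; simp at ht; exact hab ht
  · have : ((π * Equiv.swap a b) ^ r) a = (π ^ r) b := by
      have := hkey (r - 1) (by omega)
      rwa [Nat.sub_add_cancel h0] at this
    rw [this] at ht
    exact (hm r h0 (by omega)).2 ht


/-- The cycle (orbit) of `z` as a finset. -/
def cls (π : Equiv.Perm α) (z : α) : Finset α := univ.filter (π.SameCycle z)

lemma cls_eq_iff {π : Equiv.Perm α} {z w : α} : cls π z = cls π w ↔ π.SameCycle z w := by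
  constructor
  · intro h
    have : w ∈ cls π w := by simp [cls, Equiv.Perm.SameCycle.refl]
    rw [← h] at this
    simpa [cls] using this
  · intro h
    ext u
    simp only [cls, mem_filter, mem_univ, true_and]
    exact ⟨fun hu => h.symm.trans hu, fun hu => h.trans hu⟩

/-- Number of orbits. -/
def nOrb (π : Equiv.Perm α) : ℕ := (univ.image (cls π)).card

lemma nOrb_le_card (π : Equiv.Perm α) : nOrb π ≤ Fintype.card α := by
  calc (univ.image (cls π)).card ≤ univ.card := card_image_le
  _ = Fintype.card α := card_univ

lemma nOrb_one : nOrb (1 : Equiv.Perm α) = Fintype.card α := by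
  rw [nOrb, Finset.card_image_of_injective _ (fun z w h => by
    simpa using cls_eq_iff.mp h), card_univ]

lemma nOrb_eq_card_imp {π : Equiv.Perm α} (h : nOrb π = Fintype.card α) : π = 1 := by
  have hinj : Set.InjOn (cls π) (univ : Finset α) := by
    rw [← Finset.card_image_iff]
    exact h.trans card_univ.symm
  ext z
  have h1 : cls π z = cls π (π z) := cls_eq_iff.mpr (sameCycle_of_pow 1 (by simp))
  have := hinj (Finset.mem_coe.mpr (mem_univ z)) (Finset.mem_coe.mpr (mem_univ (π z))) h1
  simp [this.symm]

lemma card_image_le_of {β : Type*} [DecidableEq β] (f g : α → β) (S : Finset α)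
    (h : ∀ z ∈ S, ∀ w ∈ S, f z = f w → g z = g w) :
    (S.image g).card ≤ (S.image f).card := by
  rcases isEmpty_or_nonempty α with hE | hE
  · rw [Finset.eq_empty_of_isEmpty S]; simp
  apply Finset.card_le_card_of_surjOn (fun y => g (Function.invFunOn f S y))
  intro y hy
  simp only [Finset.coe_image, Set.mem_image, Finset.mem_coe, mem_image] at hy ⊢
  obtain ⟨z, hz, rfl⟩ := hy
  have hex : ∃ x ∈ (S : Set α), f x = f z := ⟨z, hz, rfl⟩
  refine ⟨f z, ⟨z, hz, rfl⟩, ?_⟩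
  exact h _ (Function.invFunOn_mem hex) z hz (Function.invFunOn_eq hex)

lemma nOrb_le_mul_swap {π : Equiv.Perm α} {a b : α} (hab : a ≠ b) :
    nOrb π ≤ nOrb (π * Equiv.swap a b) + 1 := by
  classical
  set π' := π * Equiv.swap a b with hπ'
  set S : Finset α := univ.filter (fun z => ¬ π.SameCycle z b) with hS
  have h1 : univ.image (cls π) ⊆ insert (cls π b) (S.image (cls π)) := by
    intro s hs
    obtain ⟨z, _, rfl⟩ := mem_image.mp hs
    by_cases hz : π.SameCycle z b
    · exact mem_insert.mpr (Or.inl (cls_eq_iff.mpr hz))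
    · exact mem_insert.mpr (Or.inr (mem_image.mpr ⟨z, by simp [hS, hz], rfl⟩))
  have h2 : (S.image (cls π)).card ≤ (S.image (cls π')).card := by
    apply card_image_le_of
    intro z hz w hw hfw
    have hzw : π'.SameCycle z w := cls_eq_iff.mp hfw
    rcases mul_swap_cases hab hzw with hc | ⟨hc1, hc2⟩ | ⟨hc1, hc2⟩
    · exact cls_eq_iff.mpr hc
    · exact absurd hc2 (by simpa [hS] using hw)
    · exact absurd hc1 (by simpa [hS] using hz)
  have h3 : (S.image (cls π')).card ≤ nOrb π' :=
    card_le_card (image_subset_image (subset_univ S))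
  calc nOrb π ≤ (insert (cls π b) (S.image (cls π))).card := card_le_card h1
    _ ≤ (S.image (cls π)).card + 1 := card_insert_le _ _
    _ ≤ (S.image (cls π')).card + 1 := Nat.add_le_add_right h2 1
    _ ≤ nOrb π' + 1 := Nat.add_le_add_right h3 1

lemma nOrb_add_one_le {π : Equiv.Perm α} {a b : α} (hab : a ≠ b) (h : π.SameCycle a b) :
    nOrb π + 1 ≤ nOrb (π * Equiv.swap a b) := by
  classical
  set π' := π * Equiv.swap a b with hπ'
  have hnot : ¬ π'.SameCycle a b := split_not_sameCycle hab h
  set S : Finset α := univ.filter (fun z => ¬ π'.SameCycle z b) with hS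
  have haS : a ∈ S := by simp [hS, hnot]
  have hincl : ∀ z w : α, π'.SameCycle z w → π.SameCycle z w := by
    intro z w hzw
    rcases mul_swap_cases hab hzw with hc | ⟨hc1, hc2⟩ | ⟨hc1, hc2⟩
    · exact hc
    · exact hc1.trans (h.trans hc2.symm)
    · exact hc1.trans (h.symm.trans hc2.symm)
  have h1 : univ.image (cls π) ⊆ S.image (cls π) := by
    intro s hs
    obtain ⟨z, _, rfl⟩ := mem_image.mp hs
    by_cases hz : π'.SameCycle z b
    · refine mem_image.mpr ⟨a, haS, ?_⟩
      exact cls_eq_iff.mpr (h.trans (hincl _ _ hz).symm)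
    · exact mem_image.mpr ⟨z, by simp [hS, hz], rfl⟩
  have h2 : (S.image (cls π)).card ≤ (S.image (cls π')).card := by
    apply card_image_le_of
    intro z hz w hw hfw
    exact cls_eq_iff.mpr (hincl _ _ (cls_eq_iff.mp hfw))
  have h3 : cls π' b ∉ S.image (cls π') := by
    intro hc
    obtain ⟨z, hz, hzc⟩ := mem_image.mp hc
    have : π'.SameCycle z b := cls_eq_iff.mp hzc
    have hz' : ¬ π'.SameCycle z b := by simpa [hS] using hz
    exact hz' this
  have h4 : insert (cls π' b) (S.image (cls π')) ⊆ univ.image (cls π') := by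
    intro s hs
    rcases mem_insert.mp hs with rfl | hs'
    · exact mem_image.mpr ⟨b, mem_univ b, rfl⟩
    · exact (image_subset_image (subset_univ S)) hs'
  calc nOrb π + 1 ≤ (S.image (cls π)).card + 1 := Nat.add_le_add_right (card_le_card h1) 1
    _ ≤ (S.image (cls π')).card + 1 := Nat.add_le_add_right h2 1
    _ = (insert (cls π' b) (S.image (cls π'))).card := (card_insert_of_notMem h3).symm
    _ ≤ nOrb π' := card_le_card h4


lemma nOrb_mul_prod_le (w : List (Equiv.Perm α)) (hw : ∀ t ∈ w, t.IsSwap) :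
    ∀ π : Equiv.Perm α, nOrb π ≤ nOrb (π * w.prod) + w.length := by
  induction w with
  | nil => intro π; simp
  | cons t w' ih =>
    intro π
    obtain ⟨a, b, hab, rfl⟩ := hw t List.mem_cons_self
    have h1 : nOrb π ≤ nOrb (π * Equiv.swap a b) + 1 := nOrb_le_mul_swap hab
    have h2 := ih (fun s hs => hw s (List.mem_cons_of_mem _ hs)) (π * Equiv.swap a b)
    rw [List.prod_cons, ← mul_assoc]
    simp only [List.length_cons]
    omega

lemma exists_short_word : ∀ (d : ℕ) (π : Equiv.Perm α), Fintype.card α - nOrb π ≤ d →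
    ∃ l : List (Equiv.Perm α), (∀ t ∈ l, t.IsSwap) ∧ l.prod = π ∧
      l.length + nOrb π ≤ Fintype.card α := by
  intro d
  induction d with
  | zero =>
    intro π h
    have h1 : nOrb π = Fintype.card α := le_antisymm (nOrb_le_card π) (by omega)
    refine ⟨[], by simp, by simp [nOrb_eq_card_imp h1], by simp [h1]⟩
  | succ d ih =>
    intro π h
    by_cases hπ : π = 1
    · exact ⟨[], by simp, by simp [hπ], by simp [nOrb_one, hπ]⟩
    · have : ∃ a, π a ≠ a := by
        by_contra hc
        push_neg at hc
        exact hπ (Equiv.ext fun x => by simp [hc x])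
      obtain ⟨a, ha⟩ := this
      have hab : a ≠ π a := fun hc => ha hc.symm
      have hcyc : π.SameCycle a (π a) := ⟨1, by simp⟩
      set π' := π * Equiv.swap a (π a) with hπ'
      have hC2 : nOrb π + 1 ≤ nOrb π' := nOrb_add_one_le hab hcyc
      have hle : Fintype.card α - nOrb π' ≤ d := by
        have := nOrb_le_card π'
        omega
      obtain ⟨l', hsw, hprod, hlen⟩ := ih π' hle
      refine ⟨l' ++ [Equiv.swap a (π a)], ?_, ?_, ?_⟩
      · intro t ht
        rcases List.mem_append.mp ht with h' | h'
        · exact hsw t h'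
        · rw [List.mem_singleton.mp h']
          exact ⟨a, π a, hab, rfl⟩
      · rw [List.prod_append, List.prod_singleton, hprod, hπ', mul_assoc,
          Equiv.swap_mul_self, mul_one]
      · rw [List.length_append, List.length_singleton]
        omega

lemma swapLength_add_nOrb_le (π : Equiv.Perm α) :
    swapLength π + nOrb π ≤ Fintype.card α := by
  obtain ⟨l, hsw, hprod, hlen⟩ :=
    exists_short_word (Fintype.card α) π (by omega)
  have : swapLength π ≤ l.length := Nat.sInf_le ⟨l, rfl, hsw, hprod⟩
  omega


end SwapProofAux

open SwapProofAux

/-- For a reduced decomposition `t₁ ⋯ t_{|σ|}` of `σ`, the orbit partition of each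
partial product `t₁ ⋯ t_i` refines the orbit partition of `σ`: every orbit of the
partial product is contained in an orbit of `σ`. -/
theorem orbits_take_refine {α : Type*} [DecidableEq α] [Fintype α] (σ : Equiv.Perm α)
    (l : List (Equiv.Perm α)) (hswap : ∀ t ∈ l, t.IsSwap) (hprod : l.prod = σ)
    (hred : l.length = swapLength σ) :
    ∀ i ≤ l.length, ∀ z z' : α, ((l.take i).prod).SameCycle z z' → σ.SameCycle z z' := by
  have step : ∀ i, (hi : i < l.length) → ∀ z w : α,
      ((l.take i).prod).SameCycle z w → ((l.take (i + 1)).prod).SameCycle z w := by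
    intro i hi z w hzw
    have htake : (l.take (i + 1)).prod = (l.take i).prod * l[i] := by
      rw [List.take_succ, List.getElem?_eq_getElem hi]
      rw [Option.toList_some, List.prod_append, List.prod_singleton]
    obtain ⟨a, b, hab, hteq⟩ := hswap l[i] (List.getElem_mem hi)
    rw [htake, hteq]
    by_cases hc : ((l.take i).prod).SameCycle a b
    · exfalso
      have h1 : nOrb (1 : Equiv.Perm α) ≤ nOrb ((1 : Equiv.Perm α) * (l.take i).prod)
          + (l.take i).length :=
        nOrb_mul_prod_le _ (fun t ht => hswap t (List.take_subset i l ht)) 1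
      rw [one_mul, nOrb_one, List.length_take] at h1
      have h2 : nOrb ((l.take i).prod) + 1 ≤ nOrb ((l.take i).prod * Equiv.swap a b) :=
        nOrb_add_one_le hab hc
      have h3 : nOrb ((l.take (i + 1)).prod) ≤
          nOrb ((l.take (i + 1)).prod * (l.drop (i + 1)).prod) + (l.drop (i + 1)).length :=
        nOrb_mul_prod_le _ (fun t ht => hswap t (List.drop_subset (i + 1) l ht)) _
      rw [← List.prod_append, List.take_append_drop, hprod, List.length_drop,
        htake, hteq] at h3
      have h4 := swapLength_add_nOrb_le σ
      rw [← hred] at h4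
      have h5 := nOrb_le_card σ
      omega
    · exact merge_mono hab hc z w hzw
  have chain : ∀ d i, i + d = l.length → ∀ z w : α,
      ((l.take i).prod).SameCycle z w → σ.SameCycle z w := by
    intro d
    induction d with
    | zero =>
      intro i hi z w h
      have : i = l.length := by omega
      rwa [this, List.take_length, hprod] at h
    | succ d ih =>
      intro i hi z w h
      exact ih (i + 1) (by omega) z w (step i (by omega) z w h)
  intro i hi z w h
  exact chain (l.length - i) i (by omega) z w h
end

section
/- Let σ₁, σ₂ be permutations of a finite set x such that |σ₁σ₂| = |σ₁| + |σ₂| (lengths add), where |·| is minimal transposition length. Then the orbit partition of σ₁ refines the orbit partition of σ₁σ₂. -/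
open Equiv Equiv.Perm

section OrbCount

variable {α : Type*} [DecidableEq α] [Fintype α]

/-- The setoid of the same-cycle relation. -/
def cycSetoid (σ : Perm α) : Setoid α :=
  ⟨σ.SameCycle, ⟨SameCycle.refl σ, SameCycle.symm, SameCycle.trans⟩⟩

instance cycDec (σ : Perm α) : DecidableRel (cycSetoid σ).r := fun x y =>
  (inferInstance : Decidable (σ.SameCycle x y))

instance cycQuotFintype (σ : Perm α) : Fintype (Quotient (cycSetoid σ)) :=
  @Quotient.fintype _ _ (cycSetoid σ) (cycDec σ)

/-- Number of orbits of a permutation. -/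
noncomputable def orbCount (σ : Perm α) : ℕ := Fintype.card (Quotient (cycSetoid σ))

/-- To show a transitive-reflexive relation contains SameCycle, check one step. -/
theorem sameCycle_ind {σ : Perm α} {R : α → α → Prop}
    (htrans : ∀ {x y z}, R x y → R y z → R x z)
    (hrefl : ∀ x, R x x) (hstep : ∀ z, R z (σ z)) :
    ∀ {z z' : α}, σ.SameCycle z z' → R z z' := by
  have key : ∀ (n : ℕ) (z : α), R z ((σ ^ n) z) := by
    intro n
    induction n with
    | zero => simpa using hrefl
    | succ n ih =>
      intro z
      have hh : (σ ^ (n+1)) z = σ ((σ ^ n) z) := by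
        rw [pow_succ', Perm.mul_apply]
      rw [hh]
      exact htrans (ih z) (hstep _)
  intro z z' hzz'
  obtain ⟨i, hi, hiz⟩ := hzz'.exists_pow_eq'
  exact hiz ▸ key i z

theorem pow_succ_apply {α : Type*} (τ : Equiv.Perm α) (n : ℕ) (z : α) :
    (τ ^ (n+1)) z = τ ((τ ^ n) z) := by
  rw [pow_succ', Perm.mul_apply]

/-- (S0): if `a` and `b` are on a common cycle of `σ`, multiplying by the swap
separates them. -/
theorem not_sameCycle_mul_swap {σ : Perm α} {a b : α} (hab : a ≠ b)
    (h : σ.SameCycle a b) : ¬ (σ * Equiv.swap a b).SameCycle a b := by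
  have hex : ∃ n : ℕ, (σ ^ (n+1)) a = b := by
    obtain ⟨i, _, hi⟩ := h.exists_pow_eq'
    cases i with
    | zero => exact absurd hi hab
    | succ n => exact ⟨n, hi⟩
  set m := Nat.find hex with hmdef
  have hm : (σ ^ (m+1)) a = b := Nat.find_spec hex
  have hmin : ∀ k < m, (σ ^ (k+1)) a ≠ b := fun k hk => Nat.find_min hex hk
  set S : Finset α := (Finset.range (m+1)).image (fun j => (σ ^ (j+1)) a) with hS
  have haS : a ∉ S := by
    intro haS
    obtain ⟨j, hj, hja⟩ := Finset.mem_image.mp haS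
    rw [Finset.mem_range] at hj
    rcases Nat.lt_succ_iff_lt_or_eq.mp hj with hj | rfl
    · -- j < m, σ^(j+1) a = a ; then σ^(m-j) a = b with m - j ≤ m, contradiction
      have h1 : (σ ^ (m - j)) a = b := by
        have : m + 1 = (m - j) + (j + 1) := by omega
        rw [this, pow_add, Perm.mul_apply, hja] at hm
        exact hm
      have h2 : (σ ^ ((m - j - 1) + 1)) a = b := by
        have he : m - j - 1 + 1 = m - j := by omega
        rw [he]; exact h1
      exact hmin (m - j - 1) (by omega) h2
    · rw [hm] at hja; exact hab hja.symm
  have hbS : b ∈ S := Finset.mem_image.mpr ⟨m, Finset.mem_range.mpr (Nat.lt_succ_self m), hm⟩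
  have hcl : ∀ s ∈ S, (σ * Equiv.swap a b) s ∈ S := by
    intro s hs
    obtain ⟨j, hj, rfl⟩ := Finset.mem_image.mp hs
    rw [Finset.mem_range] at hj
    by_cases hsb : (σ ^ (j+1)) a = b
    · rw [hsb]
      have : (σ * Equiv.swap a b) b = σ a := by
        rw [Perm.mul_apply, Equiv.swap_apply_right]
      rw [this]
      refine Finset.mem_image.mpr ⟨0, Finset.mem_range.mpr (by omega), by simp⟩
    · have hsa : (σ ^ (j+1)) a ≠ a := fun hh => haS (hh ▸ hs)
      have : (σ * Equiv.swap a b) ((σ ^ (j+1)) a) = (σ ^ (j+1+1)) a := by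
        rw [Perm.mul_apply, Equiv.swap_apply_of_ne_of_ne hsa hsb, pow_succ_apply,
          pow_succ_apply, pow_succ_apply]
      rw [this]
      have hjm : j < m := by
        rcases Nat.lt_succ_iff_lt_or_eq.mp hj with h | rfl
        · exact h
        · exact absurd hm hsb
      exact Finset.mem_image.mpr ⟨j+1, Finset.mem_range.mpr (by omega), rfl⟩
  have himg : S.image (σ * Equiv.swap a b) = S := by
    apply Finset.eq_of_subset_of_card_le
    · intro z hz
      obtain ⟨s, hs, rfl⟩ := Finset.mem_image.mp hz
      exact hcl s hs
    · rw [Finset.card_image_of_injective _ (Equiv.injective _)]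
  have hiff : ∀ z, z ∈ S ↔ (σ * Equiv.swap a b) z ∈ S := by
    intro z
    constructor
    · exact hcl z
    · intro hz
      rw [← himg] at hz
      obtain ⟨w, hw, hwz⟩ := Finset.mem_image.mp hz
      rwa [← (Equiv.injective _) hwz]
  intro hcon
  have : a ∈ S ↔ b ∈ S := by
    refine sameCycle_ind (R := fun z z' => (z ∈ S ↔ z' ∈ S)) ?_ ?_ ?_ hcon
    · exact fun h1 h2 => h1.trans h2
    · exact fun _ => Iff.rfl
    · exact fun z => hiff z
  exact haS (this.mpr hbS)

/-- (M2): multiplying by a swap of elements on different cycles joins them. -/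
theorem sameCycle_mul_swap_self {σ : Perm α} {a b : α} (hab : ¬ σ.SameCycle a b) :
    (σ * Equiv.swap a b).SameCycle a b := by
  have hne : a ≠ b := fun h => hab (h ▸ SameCycle.refl σ a)
  have hex : ∃ n : ℕ, (σ ^ (n+1)) b = b := by
    refine ⟨orderOf σ - 1, ?_⟩
    have : orderOf σ - 1 + 1 = orderOf σ := Nat.succ_pred_eq_of_pos (orderOf_pos σ)
    rw [this, pow_orderOf_eq_one]; rfl
  set m := Nat.find hex with hmdef
  have hm : (σ ^ (m+1)) b = b := Nat.find_spec hex
  have hmin : ∀ k < m, (σ ^ (k+1)) b ≠ b := fun k hk => Nat.find_min hex hk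
  have claim : ∀ j ≤ m, ((σ * Equiv.swap a b) ^ (j+1)) a = (σ ^ (j+1)) b := by
    intro j
    induction j with
    | zero =>
      intro _
      simp [Perm.mul_apply, Equiv.swap_apply_left]
    | succ j ih =>
      intro hj
      have hprev := ih (by omega)
      have hwb : (σ ^ (j+1)) b ≠ b := hmin j (by omega)
      have hwa : (σ ^ (j+1)) b ≠ a := by
        intro hh
        exact hab (SameCycle.symm ⟨((j+1 : ℕ) : ℤ), by rw [zpow_natCast]; exact hh⟩)
      rw [pow_succ_apply, hprev, Perm.mul_apply, Equiv.swap_apply_of_ne_of_ne hwa hwb,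
        pow_succ_apply, pow_succ_apply, pow_succ_apply]
  exact ⟨((m+1 : ℕ) : ℤ), by rw [zpow_natCast, claim m le_rfl]; exact hm⟩

/-- (M1): multiplying by a swap of elements on different cycles only merges cycles. -/
theorem sameCycle_le_mul_swap {σ : Perm α} {a b : α} (hab : ¬ σ.SameCycle a b)
    {z z' : α} (h : σ.SameCycle z z') : (σ * Equiv.swap a b).SameCycle z z' := by
  refine sameCycle_ind (R := (σ * Equiv.swap a b).SameCycle) ?_ ?_ ?_ h
  · exact fun h1 h2 => h1.trans h2
  · exact fun x => SameCycle.refl _ x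
  · intro z
    by_cases hza : z = a
    · rw [hza]
      have : σ a = (σ * Equiv.swap a b) b := by
        rw [Perm.mul_apply, Equiv.swap_apply_right]
      rw [this]
      exact (sameCycle_mul_swap_self hab).apply_right
    · by_cases hzb : z = b
      · rw [hzb]
        have : σ b = (σ * Equiv.swap a b) a := by
          rw [Perm.mul_apply, Equiv.swap_apply_left]
        rw [this]
        exact ((sameCycle_mul_swap_self hab).symm).apply_right
      · have : σ z = (σ * Equiv.swap a b) z := by
          rw [Perm.mul_apply, Equiv.swap_apply_of_ne_of_ne hza hzb]
        rw [this]
        exact ⟨1, by simp⟩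

/-- (M4): characterization of the merged same-cycle relation. -/
theorem sameCycle_mul_swap_cases {σ : Perm α} {a b : α} (hab : ¬ σ.SameCycle a b)
    {z z' : α} (h : (σ * Equiv.swap a b).SameCycle z z') :
    σ.SameCycle z z' ∨ (σ.SameCycle z a ∧ σ.SameCycle b z') ∨
      (σ.SameCycle z b ∧ σ.SameCycle a z') := by
  refine sameCycle_ind (R := fun z z' => σ.SameCycle z z' ∨
      (σ.SameCycle z a ∧ σ.SameCycle b z') ∨ (σ.SameCycle z b ∧ σ.SameCycle a z')) ?_ ?_ ?_ h
  · rintro x y w (hxy | ⟨h1, h2⟩ | ⟨h1, h2⟩) (hyw | ⟨h3, h4⟩ | ⟨h3, h4⟩)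
    · exact Or.inl (hxy.trans hyw)
    · exact Or.inr (Or.inl ⟨hxy.trans h3, h4⟩)
    · exact Or.inr (Or.inr ⟨hxy.trans h3, h4⟩)
    · exact Or.inr (Or.inl ⟨h1, h2.trans hyw⟩)
    · exact absurd (h2.trans h3).symm hab
    · exact Or.inl (h1.trans h4)
    · exact Or.inr (Or.inr ⟨h1, h2.trans hyw⟩)
    · exact Or.inl (h1.trans h4)
    · exact absurd (h2.trans h3) hab
  · exact fun x => Or.inl (SameCycle.refl σ x)
  · intro z
    by_cases hza : z = a
    · rw [hza]
      have hca : (σ * Equiv.swap a b) a = σ b := by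
        rw [Perm.mul_apply, Equiv.swap_apply_left]
      rw [hca]
      exact Or.inr (Or.inl ⟨SameCycle.refl σ a, ⟨1, by simp⟩⟩)
    · by_cases hzb : z = b
      · rw [hzb]
        have hcb : (σ * Equiv.swap a b) b = σ a := by
          rw [Perm.mul_apply, Equiv.swap_apply_right]
        rw [hcb]
        exact Or.inr (Or.inr ⟨SameCycle.refl σ b, ⟨1, by simp⟩⟩)
      · have : (σ * Equiv.swap a b) z = σ z := by
          rw [Perm.mul_apply, Equiv.swap_apply_of_ne_of_ne hza hzb]
        rw [this]
        exact Or.inl ⟨1, by simp⟩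

/-- (M3): the merge lemma for orbit counts. -/
theorem orbCount_mul_swap {σ : Perm α} {a b : α} (hab : ¬ σ.SameCycle a b) :
    orbCount σ = orbCount (σ * Equiv.swap a b) + 1 := by
  set σ' := σ * Equiv.swap a b with hσ'
  let f : Quotient (cycSetoid σ) → Quotient (cycSetoid σ') :=
    Quotient.lift (fun z => (Quotient.mk (cycSetoid σ') z))
      (fun x y h => Quotient.sound (sameCycle_le_mul_swap hab h))
  have hsurj : Function.Surjective f := by
    intro q
    induction q using Quotient.ind with
    | _ z => exact ⟨Quotient.mk _ z, rfl⟩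
  have hninj : ¬ Function.Injective f := by
    intro hinj
    have h0 : f (Quotient.mk _ a) = f (Quotient.mk _ b) :=
      Quotient.sound (sameCycle_mul_swap_self hab)
    exact hab (Quotient.exact (hinj h0))
  have h1 : orbCount σ' < orbCount σ :=
    Fintype.card_lt_of_surjective_not_injective f hsurj hninj
  let g : Quotient (cycSetoid σ) → Option (Quotient (cycSetoid σ')) :=
    Quotient.lift
      (fun z => if σ.SameCycle z b then none else some (Quotient.mk (cycSetoid σ') z))
      (by
        intro x y h
        have h' : σ.SameCycle x y := h
        by_cases hxb : σ.SameCycle x b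
        · rw [if_pos hxb, if_pos (h'.symm.trans hxb)]
        · rw [if_neg hxb, if_neg (fun hyb => hxb (h'.trans hyb))]
          exact congrArg some (Quotient.sound (sameCycle_le_mul_swap hab h')))
  have hginj : Function.Injective g := by
    intro q1 q2
    refine Quotient.inductionOn₂ q1 q2 ?_
    intro z z' hq
    have hq' : (if σ.SameCycle z b then (none : Option (Quotient (cycSetoid σ')))
        else some (Quotient.mk (cycSetoid σ') z)) =
        (if σ.SameCycle z' b then (none : Option (Quotient (cycSetoid σ')))
        else some (Quotient.mk (cycSetoid σ') z')) := hq
    by_cases hzb : σ.SameCycle z b <;> by_cases hz'b : σ.SameCycle z' b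
    · exact Quotient.sound (hzb.trans hz'b.symm)
    · rw [if_pos hzb, if_neg hz'b] at hq'; exact absurd hq' (by simp)
    · rw [if_neg hzb, if_pos hz'b] at hq'; exact absurd hq' (by simp)
    · rw [if_neg hzb, if_neg hz'b] at hq'
      have hzz' : σ'.SameCycle z z' := Quotient.exact (Option.some_injective _ hq')
      rcases sameCycle_mul_swap_cases hab hzz' with h | ⟨h3, h4⟩ | ⟨h3, h4⟩
      · exact Quotient.sound h
      · exact absurd h4.symm hz'b
      · exact absurd h3 hzb
  have h2 : orbCount σ ≤ orbCount σ' + 1 := by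
    have := Fintype.card_le_of_injective g hginj
    rwa [Fintype.card_option] at this
  omega

theorem orbCount_one : orbCount (1 : Perm α) = Fintype.card α := by
  have hbij : Function.Bijective (Quotient.mk (cycSetoid (1 : Perm α))) := by
    constructor
    · intro x y h
      exact sameCycle_one.mp (Quotient.exact h)
    · intro q
      induction q using Quotient.ind with
      | _ z => exact ⟨z, rfl⟩
  exact (Fintype.card_of_bijective hbij).symm

/-- A swap can decrease the orbit count by at most one. -/
theorem orbCount_le_mul_swap_add_one {σ : Perm α} {a b : α} (hab : a ≠ b) :
    orbCount σ ≤ orbCount (σ * Equiv.swap a b) + 1 := by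
  by_cases h : σ.SameCycle a b
  · have h0 := not_sameCycle_mul_swap hab h
    have h1 := orbCount_mul_swap h0
    rw [mul_assoc, Equiv.swap_mul_self, mul_one] at h1
    omega
  · exact (orbCount_mul_swap h).le

theorem orbCount_le_mul_prod_add_length :
    ∀ (l : List (Perm α)) (τ : Perm α), (∀ t ∈ l, t.IsSwap) →
      orbCount τ ≤ orbCount (τ * l.prod) + l.length := by
  intro l
  induction l with
  | nil => intro τ _; simp
  | cons t l ih =>
    intro τ hsw
    obtain ⟨a, b, hab, rfl⟩ := hsw t List.mem_cons_self
    have h1 : orbCount τ ≤ orbCount (τ * Equiv.swap a b) + 1 :=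
      orbCount_le_mul_swap_add_one hab
    have h2 := ih (τ * Equiv.swap a b) (fun t ht => hsw t (List.mem_cons_of_mem _ ht))
    rw [List.prod_cons, ← mul_assoc]
    simp only [List.length_cons]
    omega

theorem swapLength_le {σ : Perm α} {l : List (Perm α)} (hsw : ∀ t ∈ l, t.IsSwap)
    (hp : l.prod = σ) : swapLength σ ≤ l.length :=
  Nat.sInf_le ⟨l, rfl, hsw, hp⟩

theorem swapLength_exists (σ : Perm α) :
    ∃ l : List (Perm α), l.length = swapLength σ ∧ (∀ t ∈ l, t.IsSwap) ∧ l.prod = σ := by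
  have hne : {n | ∃ l : List (Perm α), l.length = n ∧ (∀ t ∈ l, t.IsSwap) ∧ l.prod = σ}.Nonempty := by
    obtain ⟨l, hp, hsw⟩ := (Equiv.Perm.truncSwapFactors σ).out
    exact ⟨l.length, l, rfl, hsw, hp⟩
  exact Nat.sInf_mem hne

theorem swapLength_one : swapLength (1 : Perm α) = 0 :=
  Nat.le_zero.mp (by simpa using swapLength_le (σ := (1 : Perm α)) (l := []) (by simp) (by simp))

/-- Fixed points of a permutation are alone on their cycle. -/
theorem sameCycle_eq_of_fixed {σ : Perm α} {x z : α} (hx : σ x = x)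
    (h : σ.SameCycle z x) : z = x := by
  obtain ⟨i, hi⟩ := h
  have hfix : (σ ^ i) x = x := (σ.zpow_apply_eq_self_of_apply_eq_self hx) i
  have h2 : (σ ^ i) z = (σ ^ i) x := by rw [hi, hfix]
  exact Equiv.injective _ h2

theorem orbCount_add_swapLength_le (σ : Perm α) :
    orbCount σ + swapLength σ ≤ Fintype.card α := by
  have main : ∀ (n : ℕ) (σ : Perm α), σ.support.card ≤ n →
      orbCount σ + swapLength σ ≤ Fintype.card α := by
    intro n
    induction n with
    | zero =>
      intro σ hs
      have : σ = 1 := by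
        rw [← Equiv.Perm.support_eq_empty_iff]
        exact Finset.card_eq_zero.mp (Nat.le_zero.mp hs)
      subst this
      rw [orbCount_one, swapLength_one]
      omega
    | succ n ih =>
      intro σ hs
      by_cases h1 : σ = 1
      · subst h1; rw [orbCount_one, swapLength_one]; omega
      · obtain ⟨x, hx⟩ : ∃ x, σ x ≠ x := by
          by_contra hcon
          push_neg at hcon
          exact h1 (Equiv.ext hcon)
        set σ'' := Equiv.swap x (σ x) * σ with hσ''
        have hcard : σ''.support.card ≤ n := by
          have hlt := Equiv.Perm.card_support_swap_mul hx
          rw [← hσ''] at hlt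
          omega
        have hihσ := ih σ'' hcard
        -- σ'' = σ * swap (σ⁻¹ x) x
        have hswid : σ'' = σ * Equiv.swap (σ⁻¹ x) x := by
          have : Equiv.swap (σ (σ⁻¹ x)) (σ x) = σ * Equiv.swap (σ⁻¹ x) x * σ⁻¹ :=
            Equiv.swap_apply_apply σ (σ⁻¹ x) x
          rw [show σ (σ⁻¹ x) = x from (Equiv.eq_symm_apply σ).mp rfl] at this
          rw [hσ'', this]
          group
        have hfix : σ'' x = x := by
          rw [hσ'', Perm.mul_apply, Equiv.swap_apply_right]
        have hux : σ⁻¹ x ≠ x := by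
          intro hcon
          exact hx (by conv_lhs => rw [← hcon, Equiv.Perm.inv_def, Equiv.apply_symm_apply])
        have hnsc : ¬ σ''.SameCycle (σ⁻¹ x) x := fun hcon =>
          hux (sameCycle_eq_of_fixed hfix hcon)
        have hmerge : orbCount σ'' = orbCount (σ'' * Equiv.swap (σ⁻¹ x) x) + 1 :=
          orbCount_mul_swap hnsc
        have hback : σ'' * Equiv.swap (σ⁻¹ x) x = σ := by
          rw [hswid, mul_assoc, Equiv.swap_mul_self, mul_one]
        rw [hback] at hmerge
        have hlen : swapLength σ ≤ swapLength σ'' + 1 := by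
          obtain ⟨l, hl, hlsw, hlp⟩ := swapLength_exists σ''
          have : (Equiv.swap x (σ x) :: l).prod = σ := by
            rw [List.prod_cons, hlp, hσ'', ← mul_assoc, Equiv.swap_mul_self, one_mul]
          have hle := swapLength_le (l := Equiv.swap x (σ x) :: l) ?_ this
          · simpa [hl] using hle
          · intro t ht
            rcases List.mem_cons.mp ht with rfl | ht
            · exact ⟨x, σ x, Ne.symm hx, rfl⟩
            · exact hlsw t ht
        omega
  exact main σ.support.card σ le_rfl

theorem orbCount_add_swapLength (σ : Perm α) :
    orbCount σ + swapLength σ = Fintype.card α := by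
  refine le_antisymm (orbCount_add_swapLength_le σ) ?_
  obtain ⟨l, hl, hlsw, hlp⟩ := swapLength_exists σ
  have := orbCount_le_mul_prod_add_length l 1 hlsw
  rw [one_mul, hlp, hl, orbCount_one] at this
  exact this

theorem chain_refine :
    ∀ (l : List (Perm α)) (τ : Perm α), (∀ t ∈ l, t.IsSwap) →
      orbCount (τ * l.prod) + l.length ≤ orbCount τ →
      ∀ z z' : α, τ.SameCycle z z' → (τ * l.prod).SameCycle z z' := by
  intro l
  induction l with
  | nil =>
    intro τ _ _ z z' h
    simpa using h
  | cons t l ih =>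
    intro τ hsw hc z z' hzz'
    obtain ⟨a, b, hab, rfl⟩ := hsw t List.mem_cons_self
    rw [List.prod_cons, ← mul_assoc] at hc ⊢
    simp only [List.length_cons] at hc
    by_cases hs : τ.SameCycle a b
    · exfalso
      have h0 := not_sameCycle_mul_swap hab hs
      have h1 := orbCount_mul_swap h0
      rw [mul_assoc, Equiv.swap_mul_self, mul_one] at h1
      have h2 := orbCount_le_mul_prod_add_length l (τ * Equiv.swap a b)
        (fun t ht => hsw t (List.mem_cons_of_mem _ ht))
      omega
    · have hmerge := orbCount_mul_swap hs
      have hgrow := fun {z z' : α} (h : τ.SameCycle z z') => sameCycle_le_mul_swap hs h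
      exact ih (τ * Equiv.swap a b) (fun t ht => hsw t (List.mem_cons_of_mem _ ht))
        (by omega) z z' (hgrow hzz')

end OrbCount

/-- If the minimal transposition lengths of `σ₁` and `σ₂` add up to that of `σ₁σ₂`,
then the orbit partition of `σ₁` refines the orbit partition of `σ₁σ₂`. -/
theorem orbits_refine_of_swapLength_add {α : Type*} [DecidableEq α] [Fintype α]
    (σ₁ σ₂ : Equiv.Perm α)
    (h : swapLength (σ₁ * σ₂) = swapLength σ₁ + swapLength σ₂) :
    ∀ z z' : α, σ₁.SameCycle z z' → (σ₁ * σ₂).SameCycle z z' := by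
  obtain ⟨l, hl, hlsw, hlp⟩ := swapLength_exists σ₂
  have hf1 := orbCount_add_swapLength σ₁
  have hf12 := orbCount_add_swapLength (σ₁ * σ₂)
  have hc : orbCount (σ₁ * l.prod) + l.length ≤ orbCount σ₁ := by
    rw [hlp, hl]; omega
  intro z z' hzz'
  have hres := chain_refine l σ₁ hlsw hc z z' hzz'
  rwa [hlp] at hres
end

section
/- In a group B, let M be a submonoid generated by a set S of elements all of which are mapped to 1 by a group homomorphism l: B → ℤ (in fact l(s) = 1 for all s ∈ S). Then left divisibility in M (m ≼ m' iff there exists m'' ∈ M with m m'' = m') is a partial order on M. -/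
/-! Every element of `M` other than `1` has positive length, since length is additive and the
generators have length `1`. So if `a * x = b` and `b * y = a` with `x, y ∈ M`, then `x * y = 1`
forces `l x + l y = 0`, hence `x = 1` and `a = b`. -/

section Length

variable {B : Type*} [Group B] {l : B → ℤ}

theorem length_one (hl : ∀ a b : B, l (a * b) = l a + l b) : l 1 = 0 := by
  simpa using hl 1 1

theorem eq_one_or_length_pos_of_mem_closure (hl : ∀ a b : B, l (a * b) = l a + l b)
    {S : Set B} (hS : ∀ s ∈ S, 0 < l s) {m : B} (hm : m ∈ Submonoid.closure S) :
    m = 1 ∨ 0 < l m := by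
  induction hm using Submonoid.closure_induction with
  | mem s hs => exact .inr (hS s hs)
  | one => exact .inl rfl
  | mul a b _ _ ha hb =>
    rcases ha with rfl | ha
    · simpa using hb
    rcases hb with rfl | hb
    · simpa using Or.inr ha
    exact .inr (by rw [hl]; omega)

theorem eq_one_of_mul_eq_one_of_mem_closure (hl : ∀ a b : B, l (a * b) = l a + l b)
    {S : Set B} (hS : ∀ s ∈ S, 0 < l s) {x y : B} (hx : x ∈ Submonoid.closure S)
    (hy : y ∈ Submonoid.closure S) (hxy : x * y = 1) : x = 1 := by
  have hsum : l x + l y = 0 := by rw [← hl, hxy, length_one hl]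
  rcases eq_one_or_length_pos_of_mem_closure hl hS hx with rfl | hx_pos
  · rfl
  rcases eq_one_or_length_pos_of_mem_closure hl hS hy with rfl | hy_pos
  · simpa using hxy
  omega

end Length

/-- In a group `B`, if `M` is the submonoid generated by a set `S` of elements of
length `1` for a length homomorphism `l : B → ℤ`, then left divisibility in `M` is
reflexive, transitive and antisymmetric, i.e. a partial order on `M`. -/
theorem leftDvd_partialOrder {B : Type*} [Group B] (l : B → ℤ)
    (hl : ∀ a b : B, l (a * b) = l a + l b) (S : Set B) (hS : ∀ s ∈ S, l s = 1) :
    let M := Submonoid.closure S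
    let r : B → B → Prop := fun a b => ∃ c ∈ M, a * c = b
    (∀ m ∈ M, r m m) ∧
    (∀ a b c : B, r a b → r b c → r a c) ∧
    (∀ a b : B, a ∈ M → b ∈ M → r a b → r b a → a = b) := by
  intro M r
  have hS_pos : ∀ s ∈ S, 0 < l s := fun s hs => by rw [hS s hs]; exact one_pos
  refine ⟨fun m _ => ⟨1, M.one_mem, mul_one m⟩, ?_, ?_⟩
  · rintro a _ _ ⟨x, hx, rfl⟩ ⟨y, hy, rfl⟩
    exact ⟨x * y, M.mul_mem hx hy, (mul_assoc a x y).symm⟩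
  · rintro a _ _ _ ⟨x, hx, rfl⟩ ⟨y, hy, hxy⟩
    have hxy_one : x * y = 1 := mul_left_cancel (a := a) (by rw [← mul_assoc, hxy, mul_one])
    rw [eq_one_of_mul_eq_one_of_mem_closure hl hS_pos hx hy hxy_one, mul_one]
end

section
/- Let P be a set with an atomic partial product (partial associative product with unit, a finite set of atoms, and an ℕ-grading l with l(p) > 0 for p ≠ 1 and l(ab) = l(a) + l(b)). Let M(P) be the monoid presented by generators P and relations ab = c whenever the partial product ab is defined and equals c. Then the natural map P → M(P) is injective. -/
/-- An atomic partial product on a set `P`: a partial product (with values in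
`Option P`) with a unit, associativity, a finite set of atoms, and an `ℕ`-grading. -/
structure AtomicPartialProduct (P : Type*) where
  mul : P → P → Option P
  one : P
  one_mul : ∀ a, mul one a = some a
  mul_one : ∀ a, mul a one = some a
  /-- `ab` and `(ab)c` are defined iff `bc` and `a(bc)` are defined. -/
  assoc_defined : ∀ a b c : P,
    (∃ ab, mul a b = some ab ∧ (mul ab c).isSome) ↔
    (∃ bc, mul b c = some bc ∧ (mul a bc).isSome)
  /-- When both are defined, `(ab)c = a(bc)`. -/
  assoc : ∀ a b c ab bc x y : P, mul a b = some ab → mul b c = some bc →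
    mul ab c = some x → mul a bc = some y → x = y
  /-- The product of two non-unit elements is a non-unit. -/
  ne_one_mul : ∀ a b c : P, a ≠ one → b ≠ one → mul a b = some c → c ≠ one
  /-- There are finitely many atoms. -/
  atoms_finite : {p : P | p ≠ one ∧ ∀ a b, a ≠ one → b ≠ one → mul a b ≠ some p}.Finite
  len : P → ℕ
  len_pos : ∀ p, p ≠ one → 0 < len p
  len_mul : ∀ a b c, mul a b = some c → len c = len a + len b

namespace AtomicPartialProduct

variable {P : Type*} (S : AtomicPartialProduct P)

/-- The set of atoms: non-unit elements which are not products of non-units. -/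
def atoms : Set P :=
  {p : P | p ≠ S.one ∧ ∀ a b, a ≠ S.one → b ≠ S.one → S.mul a b ≠ some p}

/-- The defining relations of the monoid `M(P)`: `a · b = c` whenever the partial
product `ab` is defined and equal to `c`. -/
def rel : FreeMonoid P → FreeMonoid P → Prop := fun u v =>
  ∃ a b c : P, S.mul a b = some c ∧
    u = FreeMonoid.of a * FreeMonoid.of b ∧ v = FreeMonoid.of c

/-- The monoid `M(P)` presented by generators `P` and relations `ab = c` whenever
the partial product is defined. -/
def M := (conGen S.rel).Quotient

instance : Monoid S.M := inferInstanceAs (Monoid (conGen S.rel).Quotient)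

/-- The natural map `P → M(P)`. -/
def ι (p : P) : S.M := (conGen S.rel).mk' (FreeMonoid.of p)

/-- `a` left-divides `c` in `P`. -/
def leftDvd (a c : P) : Prop := ∃ b, S.mul a b = some c

/-- `a` right-divides `c` in `P`. -/
def rightDvd (a c : P) : Prop := ∃ b, S.mul b a = some c

/-- `Δ` is a least common right multiple of `s` and `t` in `P`. -/
def IsRightLcm (s t Δ : P) : Prop :=
  S.leftDvd s Δ ∧ S.leftDvd t Δ ∧ ∀ m, S.leftDvd s m → S.leftDvd t m → S.leftDvd Δ m

/-- `Δ` is a least common left multiple of `s` and `t` in `P`. -/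
def IsLeftLcm (s t Δ : P) : Prop :=
  S.rightDvd s Δ ∧ S.rightDvd t Δ ∧ ∀ m, S.rightDvd s m → S.rightDvd t m → S.rightDvd Δ m

end AtomicPartialProduct

/-- A pre-Garside structure: an atomic partial product satisfying the lcm axioms
(iv), (iv'), the closure axiom (v) and the cancellativity axiom (vi). -/
structure PreGarside (P : Type*) extends AtomicPartialProduct P where
  /-- (iv) two atoms with a common right multiple have a right lcm. -/
  lcm_right : ∀ s ∈ toAtomicPartialProduct.atoms, ∀ t ∈ toAtomicPartialProduct.atoms,
    (∃ m, toAtomicPartialProduct.leftDvd s m ∧ toAtomicPartialProduct.leftDvd t m) →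
    ∃ Δ, toAtomicPartialProduct.IsRightLcm s t Δ
  /-- (iv') two atoms with a common left multiple have a left lcm. -/
  lcm_left : ∀ s ∈ toAtomicPartialProduct.atoms, ∀ t ∈ toAtomicPartialProduct.atoms,
    (∃ m, toAtomicPartialProduct.rightDvd s m ∧ toAtomicPartialProduct.rightDvd t m) →
    ∃ Δ, toAtomicPartialProduct.IsLeftLcm s t Δ
  /-- (v) if `as` and `at` are defined then so is `aΔ_{s,t}`. -/
  mul_lcm_defined : ∀ s ∈ toAtomicPartialProduct.atoms, ∀ t ∈ toAtomicPartialProduct.atoms,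
    ∀ Δ a : P, toAtomicPartialProduct.IsRightLcm s t Δ →
    (toAtomicPartialProduct.mul a s).isSome → (toAtomicPartialProduct.mul a t).isSome →
    (toAtomicPartialProduct.mul a Δ).isSome
  /-- (vi) elements of `P` are cancellable in `M(P)` (right cancellation). -/
  cancel_right : ∀ (m : toAtomicPartialProduct.M) (a b : P),
    toAtomicPartialProduct.ι a * m = toAtomicPartialProduct.ι b * m → a = b
  /-- (vi) elements of `P` are cancellable in `M(P)` (left cancellation). -/
  cancel_left : ∀ (m : toAtomicPartialProduct.M) (a b : P),
    m * toAtomicPartialProduct.ι a = m * toAtomicPartialProduct.ι b → a = b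

namespace AtomicPartialProduct

variable {P : Type*} (S : AtomicPartialProduct P)

/-- Evaluate a word starting from `a`, left to right. -/
def evalFrom : P → List P → Option P
  | a, [] => some a
  | a, b :: w => (S.mul a b).bind fun ab => evalFrom ab w

@[simp] lemma evalFrom_nil (a : P) : S.evalFrom a [] = some a := rfl

@[simp] lemma evalFrom_cons (a b : P) (w : List P) :
    S.evalFrom a (b :: w) = (S.mul a b).bind fun ab => S.evalFrom ab w := rfl

/-- Evaluate a word. -/
def eval (w : FreeMonoid P) : Option P := S.evalFrom S.one (FreeMonoid.toList w)

lemma mul_assoc_opt (x b y : P) :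
    ((S.mul x b).bind fun xb => S.mul xb y) =
      (S.mul b y).bind fun by' => S.mul x by' := by
  cases h1 : S.mul x b with
  | none =>
    cases h2 : S.mul b y with
    | none => rfl
    | some by' =>
      simp only [Option.bind_none, Option.bind_some]
      cases h3 : S.mul x by' with
      | none => rfl
      | some z =>
        exfalso
        obtain ⟨ab, hab, _⟩ := (S.assoc_defined x b y).mpr
          ⟨by', h2, by rw [h3]; exact rfl⟩
        rw [h1] at hab; exact Option.some_ne_none _ hab.symm
  | some xb =>
    simp only [Option.bind_some]
    cases h3 : S.mul xb y with
    | none =>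
      cases h2 : S.mul b y with
      | none => rfl
      | some by' =>
        simp only [Option.bind_some]
        cases h4 : S.mul x by' with
        | none => rfl
        | some z =>
          exfalso
          obtain ⟨ab, hab, hsome⟩ := (S.assoc_defined x b y).mpr
            ⟨by', h2, by rw [h4]; exact rfl⟩
          rw [h1] at hab
          obtain rfl : ab = xb := by injection hab.symm
          rw [h3] at hsome; simp at hsome
    | some z =>
      obtain ⟨bc, hbc, hsome⟩ := (S.assoc_defined x b y).mp
        ⟨xb, h1, by rw [h3]; exact rfl⟩
      rw [hbc]
      simp only [Option.bind_some]
      obtain ⟨w, hw⟩ := Option.isSome_iff_exists.mp hsome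
      rw [hw]
      exact congrArg some (S.assoc x b y xb bc z w h1 hbc h3 hw)

lemma evalFrom_eq (w : List P) : ∀ x : P,
    S.evalFrom x w = (S.evalFrom S.one w).bind fun y => S.mul x y := by
  induction w with
  | nil => intro x; simp [S.mul_one]
  | cons b t ih =>
    intro x
    rw [evalFrom_cons, evalFrom_cons, S.one_mul, Option.bind_some, ih b]
    cases het : S.evalFrom S.one t with
    | none =>
      simp only [Option.bind_none]
      cases S.mul x b with
      | none => rfl
      | some xb => rw [Option.bind_some, ih xb, het, Option.bind_none]
    | some y =>
      simp only [Option.bind_some]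
      have key : (S.mul x b).bind (fun xb => S.evalFrom xb t) =
          (S.mul x b).bind fun xb => S.mul xb y := by
        cases hxb : S.mul x b with
        | none => rfl
        | some xb =>
          simp only [Option.bind_some]
          rw [ih xb, het, Option.bind_some]
      rw [key, S.mul_assoc_opt x b y]

lemma evalFrom_append (u v : List P) : ∀ x : P,
    S.evalFrom x (u ++ v) = (S.evalFrom x u).bind fun y => S.evalFrom y v := by
  induction u with
  | nil => intro x; simp
  | cons b t ih =>
    intro x
    rw [List.cons_append, evalFrom_cons, evalFrom_cons]
    cases S.mul x b with
    | none => rfl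
    | some xb => simp only [Option.bind_some]; exact ih xb

lemma eval_mul (u v : FreeMonoid P) :
    S.eval (u * v) = (S.eval u).bind fun x => (S.eval v).bind fun y => S.mul x y := by
  have h : FreeMonoid.toList (u * v) = FreeMonoid.toList u ++ FreeMonoid.toList v :=
    rfl
  unfold eval
  rw [h, S.evalFrom_append]
  cases S.evalFrom S.one (FreeMonoid.toList u) with
  | none => rfl
  | some x =>
    simp only [Option.bind_some]
    exact S.evalFrom_eq _ x

lemma eval_of (a : P) : S.eval (FreeMonoid.of a) = some a := by
  unfold eval
  rw [show FreeMonoid.toList (FreeMonoid.of a) = [a] from rfl, evalFrom_cons,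
    S.one_mul, Option.bind_some, evalFrom_nil]

/-- The congruence of "equal evaluation". -/
def evalCon : Con (FreeMonoid P) where
  r u v := S.eval u = S.eval v
  iseqv := ⟨fun _ => rfl, Eq.symm, Eq.trans⟩
  mul' := by
    intro u u' v v' h1 h2
    show S.eval _ = S.eval _
    rw [S.eval_mul, S.eval_mul, h1, h2]

lemma rel_le_evalCon : conGen S.rel ≤ S.evalCon := by
  apply Con.conGen_le.mpr
  rintro u v ⟨a, b, c, hc, rfl, rfl⟩
  show S.eval _ = S.eval _
  rw [S.eval_mul, S.eval_of, S.eval_of, S.eval_of]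
  simp only [Option.bind_some]
  exact hc

end AtomicPartialProduct

/-- The natural map `P → M(P)` is injective. -/
theorem iota_injective {P : Type*} (S : AtomicPartialProduct P) :
    Function.Injective S.ι := by
  intro a b h
  have hc : conGen S.rel (FreeMonoid.of a) (FreeMonoid.of b) := Con.eq _ |>.mp h
  have heq : S.eval (FreeMonoid.of a) = S.eval (FreeMonoid.of b) :=
    S.rel_le_evalCon hc
  rw [S.eval_of, S.eval_of] at heq
  injection heq
end

section
/- For z₁, z₁', z₂, z₂' in μₙ (the n-th roots of unity) with z₁ ≠ z₁' and z₂ ≠ z₂': if the segments [z₁,z₁'] and [z₂,z₂'] are disjoint, then the partition of μₙ whose only nontrivial parts are {z₁,z₁'} and {z₂,z₂'} (or the single part if the pairs coincide) is the minimum, for the refinement order, among non-obstructing partitions coarser than both {{z₁,z₁'}} and {{z₂,z₂'}}; if the segments intersect, the partition with single nontrivial part {z₁,z₁',z₂,z₂'} is this minimum. In particular any two such edge-partitions of μₙ have a least upper bound in the poset of non-obstructing partitions of μₙ. -/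
/-- A finite set of points of `ℂ` is in convex position (is the vertex set of a
convex polygon) if no point lies in the convex hull of the others. -/
def ConvexPos (s : Set ℂ) : Prop := ∀ z ∈ s, z ∉ convexHull ℝ (s \ {z})

/-- `l` is a partition of `x`: nonempty parts, pairwise disjoint, with union `x`. -/
def IsPartitionOf (x : Set ℂ) (l : Set (Set ℂ)) : Prop :=
  (∀ p ∈ l, p.Nonempty) ∧ ⋃₀ l = x ∧ ∀ p ∈ l, ∀ q ∈ l, p ≠ q → Disjoint p q

/-- A partition is non-obstructing if every part is in convex position and the
convex hulls of distinct parts are disjoint. -/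
def NonObstructing (l : Set (Set ℂ)) : Prop :=
  (∀ p ∈ l, ConvexPos p) ∧
  ∀ p ∈ l, ∀ q ∈ l, p ≠ q → Disjoint (convexHull ℝ p) (convexHull ℝ q)

/-- `l'` refines `l`: every part of `l'` is contained in a part of `l`. -/
def Refines (l' l : Set (Set ℂ)) : Prop := ∀ p ∈ l', ∃ q ∈ l, p ⊆ q

/-- The partition of `x` whose nontrivial parts are the given `parts`, completed
by singletons. -/
def withSingletons (x : Set ℂ) (parts : Set (Set ℂ)) : Set (Set ℂ) :=
  parts ∪ ((fun z => ({z} : Set ℂ)) '' (x \ ⋃₀ parts))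

lemma sphere_mem_convexHull {S : Set ℂ} (hS : ∀ w ∈ S, ‖w‖ ≤ 1)
    {z : ℂ} (hz : ‖z‖ = 1) (h : z ∈ convexHull ℝ S) : z ∈ S := by
  rw [convexHull_eq] at h
  obtain ⟨ι, t, w, f, hw0, hw1, hfS, hcm⟩ := h
  rw [Finset.centerMass, hw1, inv_one, one_smul] at hcm
  have key : ∀ i ∈ t, (starRingEnd ℂ z * f i).re ≤ 1 := by
    intro i hi
    calc (starRingEnd ℂ z * f i).re ≤ ‖starRingEnd ℂ z * f i‖ := Complex.re_le_norm _
    _ = ‖z‖ * ‖f i‖ := by rw [norm_mul, Complex.norm_conj]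
    _ ≤ 1 := by rw [hz, one_mul]; exact hS _ (hfS i hi)
  have hzz : z * starRingEnd ℂ z = 1 := by
    rw [Complex.mul_conj]
    rw [Complex.normSq_eq_norm_sq, hz]; norm_num
  have hsum : ∑ i ∈ t, w i * (starRingEnd ℂ z * f i).re = 1 := by
    calc ∑ i ∈ t, w i * (starRingEnd ℂ z * f i).re
        = (starRingEnd ℂ z * ∑ i ∈ t, w i • f i).re := by
          rw [Finset.mul_sum, Complex.re_sum]
          refine Finset.sum_congr rfl fun i hi => ?_
          rw [mul_smul_comm, Complex.real_smul, Complex.mul_re]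
          simp
    _ = 1 := by
          rw [hcm, mul_comm, hzz]; simp
  have hle : ∀ i ∈ t, w i * (starRingEnd ℂ z * f i).re ≤ w i * 1 := fun i hi =>
    mul_le_mul_of_nonneg_left (key i hi) (hw0 i hi)
  have heq := (Finset.sum_eq_sum_iff_of_le hle).mp
    (by rw [hsum]; simp [hw1])
  have : ∃ i ∈ t, 0 < w i := by
    by_contra hc
    push_neg at hc
    have : ∑ i ∈ t, w i = 0 := Finset.sum_eq_zero fun i hi =>
      le_antisymm (hc i hi) (hw0 i hi)
    rw [hw1] at this; norm_num at this
  obtain ⟨i, hi, hwi⟩ := this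
  have hre : (starRingEnd ℂ z * f i).re = 1 := by
    have h' := heq i hi
    have := mul_left_cancel₀ hwi.ne' h'.symm
    simpa using this.symm
  have habs : ‖starRingEnd ℂ z * f i‖ ≤ 1 := by
    rw [norm_mul, Complex.norm_conj, hz, one_mul]; exact hS _ (hfS i hi)
  set u := starRingEnd ℂ z * f i with hu
  have h1 : ‖u‖ = 1 :=
    le_antisymm habs (by rw [← hre]; exact Complex.re_le_norm _)
  have hns : Complex.normSq u = 1 := by rw [← Complex.sq_norm, h1]; norm_num
  have him : u.im = 0 := by
    rw [Complex.normSq_apply] at hns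
    nlinarith [hre]
  have hu1 : u = 1 := by
    apply Complex.ext
    · simpa using hre
    · simpa using him
  have h3 : (z * starRingEnd ℂ z) * f i = z := by rw [mul_assoc, ← hu, hu1, mul_one]
  rw [hzz, one_mul] at h3
  exact h3 ▸ hfS i hi


lemma convexPos_of_sphere {s : Set ℂ} (hs : ∀ w ∈ s, ‖w‖ = 1) : ConvexPos s := by
  intro z hz hmem
  exact (sphere_mem_convexHull (fun w hw => (hs w hw.1).le) (hs z hz) hmem).2 rfl

lemma abs_of_root {n : ℕ} (hn : 0 < n) {z : ℂ} (h : z ^ n = 1) : ‖z‖ = 1 := by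
  have h2 : ‖z‖ ^ n = 1 := by
    rw [← norm_pow, h, norm_one]
  rcases (pow_eq_one_iff_cases.mp h2) with h | h | h
  · omega
  · exact h
  · nlinarith [norm_nonneg z, h.1]

lemma withSingletons_isPartition (x : Set ℂ) (P : Set (Set ℂ))
    (h1 : ∀ p ∈ P, p.Nonempty) (h2 : ⋃₀ P ⊆ x)
    (h3 : ∀ p ∈ P, ∀ q ∈ P, p ≠ q → Disjoint p q) :
    IsPartitionOf x (withSingletons x P) := by
  refine ⟨?_, ?_, ?_⟩
  · rintro p (hp | ⟨z, hz, rfl⟩)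
    · exact h1 p hp
    · exact ⟨z, rfl⟩
  · ext w
    simp only [withSingletons, Set.sUnion_union, Set.mem_union, Set.mem_sUnion]
    constructor
    · rintro (⟨p, hp, hw⟩ | ⟨p, ⟨z, hz, rfl⟩, hw⟩)
      · exact h2 ⟨p, hp, hw⟩
      · simp only [Set.mem_singleton_iff] at hw; subst hw; exact hz.1
    · intro hw
      by_cases hc : w ∈ ⋃₀ P
      · exact Or.inl hc
      · exact Or.inr ⟨{w}, ⟨w, ⟨hw, hc⟩, rfl⟩, rfl⟩
  · rintro p (hp | ⟨z, hz, rfl⟩) q (hq | ⟨z', hz', rfl⟩) hne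
    · exact h3 p hp q hq hne
    · rw [Set.disjoint_singleton_right]
      exact fun hc => hz'.2 ⟨p, hp, hc⟩
    · rw [Set.disjoint_singleton_left]
      exact fun hc => hz.2 ⟨q, hq, hc⟩
    · rw [Set.disjoint_singleton_right, Set.mem_singleton_iff]
      exact fun hc => hne (by rw [hc])

lemma withSingletons_nonObstructing (x : Set ℂ) (P : Set (Set ℂ))
    (hcp : ∀ p ∈ P, ConvexPos p)
    (hhull : ∀ p ∈ P, ∀ q ∈ P, p ≠ q → Disjoint (convexHull ℝ p) (convexHull ℝ q))
    (hsing : ∀ p ∈ P, ∀ z ∈ x, z ∉ ⋃₀ P → z ∉ convexHull ℝ p) :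
    NonObstructing (withSingletons x P) := by
  constructor
  · rintro p (hp | ⟨z, hz, rfl⟩)
    · exact hcp p hp
    · intro w hw
      simp only [Set.mem_singleton_iff] at hw; subst hw
      have : ({w} : Set ℂ) \ {w} = ∅ := Set.diff_self
      rw [this, convexHull_empty]
      exact not_false
  · rintro p (hp | ⟨z, hz, rfl⟩) q (hq | ⟨z', hz', rfl⟩) hne
    · exact hhull p hp q hq hne
    · rw [convexHull_singleton, Set.disjoint_singleton_right]
      exact hsing p hp z' hz'.1 hz'.2
    · rw [convexHull_singleton, Set.disjoint_singleton_left]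
      exact hsing q hq z hz.1 hz.2
    · rw [convexHull_singleton, convexHull_singleton,
        Set.disjoint_singleton_right, Set.mem_singleton_iff]
      exact fun hc => hne (by rw [hc])

lemma refines_withSingletons (x : Set ℂ) (P : Set (Set ℂ)) (L : Set (Set ℂ))
    (hL : ⋃₀ L = x) (hparts : ∀ p ∈ P, ∃ q ∈ L, p ⊆ q) :
    Refines (withSingletons x P) L := by
  rintro p (hp | ⟨z, hz, rfl⟩)
  · exact hparts p hp
  · have : z ∈ ⋃₀ L := hL ▸ hz.1
    obtain ⟨q, hq, hzq⟩ := this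
    exact ⟨q, hq, Set.singleton_subset_iff.mpr hzq⟩

/-- For two non-obstructing edges `{z₁,z₁'}`, `{z₂,z₂'}` of the `n`-th roots of
unity: if the segments are disjoint, the partition with nontrivial parts the two
pairs is the minimum non-obstructing partition coarser than both edge-partitions;
if the segments meet, the partition with single nontrivial part
`{z₁,z₁',z₂,z₂'}` is this minimum. In particular the two edge-partitions have a
least upper bound in the poset of non-obstructing partitions of `μₙ`. -/
theorem lcm_of_edges (n : ℕ) (hn : 0 < n) (z₁ z₁' z₂ z₂' : ℂ)
    (h₁ : z₁ ^ n = 1) (h₁' : z₁' ^ n = 1) (h₂ : z₂ ^ n = 1) (h₂' : z₂' ^ n = 1)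
    (hne₁ : z₁ ≠ z₁') (hne₂ : z₂ ≠ z₂') :
    let x : Set ℂ := {z | z ^ n = 1}
    let coarser : Set (Set (Set ℂ)) := {l | IsPartitionOf x l ∧ NonObstructing l ∧
      Refines (withSingletons x {{z₁, z₁'}}) l ∧ Refines (withSingletons x {{z₂, z₂'}}) l}
    (Disjoint (segment ℝ z₁ z₁') (segment ℝ z₂ z₂') →
      withSingletons x {{z₁, z₁'}, {z₂, z₂'}} ∈ coarser ∧
      ∀ l ∈ coarser, Refines (withSingletons x {{z₁, z₁'}, {z₂, z₂'}}) l) ∧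
    (¬ Disjoint (segment ℝ z₁ z₁') (segment ℝ z₂ z₂') →
      withSingletons x {({z₁, z₁', z₂, z₂'} : Set ℂ)} ∈ coarser ∧
      ∀ l ∈ coarser, Refines (withSingletons x {({z₁, z₁', z₂, z₂'} : Set ℂ)}) l) ∧
    ∃ l₀ ∈ coarser, ∀ l ∈ coarser, Refines l₀ l := by
  intro x coarser
  set A : Set ℂ := {z₁, z₁'} with hA
  set B : Set ℂ := {z₂, z₂'} with hB
  set Q : Set ℂ := {z₁, z₁', z₂, z₂'} with hQ
  have habs : ∀ w ∈ x, ‖w‖ = 1 := fun w hw => abs_of_root hn hw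
  have hAx : A ⊆ x := by
    rintro w hw
    simp only [hA, Set.mem_insert_iff, Set.mem_singleton_iff] at hw
    rcases hw with rfl | rfl
    · exact h₁
    · exact h₁'
  have hBx : B ⊆ x := by
    rintro w hw
    simp only [hB, Set.mem_insert_iff, Set.mem_singleton_iff] at hw
    rcases hw with rfl | rfl
    · exact h₂
    · exact h₂'
  have hQx : Q ⊆ x := by
    rintro w hw
    simp only [hQ, Set.mem_insert_iff, Set.mem_singleton_iff] at hw
    rcases hw with rfl | rfl | rfl | rfl
    · exact h₁
    · exact h₁'
    · exact h₂
    · exact h₂'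
  have hAseg : A ⊆ segment ℝ z₁ z₁' := by
    rw [← convexHull_pair]; exact subset_convexHull ℝ _
  have hBseg : B ⊆ segment ℝ z₂ z₂' := by
    rw [← convexHull_pair]; exact subset_convexHull ℝ _
  have hullA : convexHull ℝ A = segment ℝ z₁ z₁' := convexHull_pair _ _
  have hullB : convexHull ℝ B = segment ℝ z₂ z₂' := convexHull_pair _ _
  -- generic "point not in hull of part" principle
  have hsing_gen : ∀ (P : Set (Set ℂ)), (∀ p ∈ P, p ⊆ x) →
      ∀ p ∈ P, ∀ z ∈ x, z ∉ ⋃₀ P → z ∉ convexHull ℝ p := by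
    intro P hPx p hp z hz hzP hc
    exact hzP ⟨p, hp, sphere_mem_convexHull
      (fun w hw => (habs w (hPx p hp hw)).le) (habs z hz) hc⟩
  have main1 : Disjoint (segment ℝ z₁ z₁') (segment ℝ z₂ z₂') →
      withSingletons x {A, B} ∈ coarser ∧
      ∀ l ∈ coarser, Refines (withSingletons x {A, B}) l := by
    intro hd
    have hPx : ∀ p ∈ ({A, B} : Set (Set ℂ)), p ⊆ x := by
      rintro p hp
      rcases hp with rfl | rfl
      · exact hAx
      · exact hBx
    have hpart : IsPartitionOf x (withSingletons x {A, B}) := by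
      apply withSingletons_isPartition
      · rintro p (rfl | rfl)
        · exact ⟨z₁, Set.mem_insert _ _⟩
        · exact ⟨z₂, Set.mem_insert _ _⟩
      · rintro w ⟨p, hp, hw⟩
        exact hPx p hp hw
      · rintro p (rfl | rfl) q (rfl | rfl) hne
        · exact absurd rfl hne
        · exact hd.mono hAseg hBseg
        · exact (hd.mono hAseg hBseg).symm
        · exact absurd rfl hne
    refine ⟨⟨hpart, ?_, ?_, ?_⟩, ?_⟩
    · apply withSingletons_nonObstructing
      · intro p hp
        exact convexPos_of_sphere (fun w hw => habs w (hPx p hp hw))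
      · rintro p (rfl | rfl) q (rfl | rfl) hne
        · exact absurd rfl hne
        · rw [hullA, hullB]; exact hd
        · rw [hullA, hullB]; exact hd.symm
        · exact absurd rfl hne
      · exact hsing_gen _ hPx
    · exact refines_withSingletons x _ _ hpart.2.1
        (by rintro p rfl; exact ⟨A, Or.inl (Set.mem_insert _ _), subset_rfl⟩)
    · exact refines_withSingletons x _ _ hpart.2.1
        (by rintro p rfl
            exact ⟨B, Or.inl (Set.mem_insert_of_mem _ rfl), subset_rfl⟩)
    · rintro l ⟨hlp, hlno, hr1, hr2⟩
      apply refines_withSingletons x _ _ hlp.2.1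
      rintro p (rfl | rfl)
      · exact hr1 A (Or.inl rfl)
      · exact hr2 B (Or.inl rfl)
  have main2 : ¬ Disjoint (segment ℝ z₁ z₁') (segment ℝ z₂ z₂') →
      withSingletons x {Q} ∈ coarser ∧
      ∀ l ∈ coarser, Refines (withSingletons x {Q}) l := by
    intro hnd
    obtain ⟨w, hw1, hw2⟩ := Set.not_disjoint_iff.mp hnd
    have hPx : ∀ p ∈ ({Q} : Set (Set ℂ)), p ⊆ x := by rintro p rfl; exact hQx
    have hAQ : A ⊆ Q := by
      rintro v hv
      rcases hv with rfl | rfl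
      · exact Set.mem_insert _ _
      · exact Set.mem_insert_of_mem _ (Set.mem_insert _ _)
    have hBQ : B ⊆ Q := by
      rintro v hv
      rcases hv with rfl | rfl
      · exact Set.mem_insert_of_mem _ (Set.mem_insert_of_mem _ (Set.mem_insert _ _))
      · exact Set.mem_insert_of_mem _
          (Set.mem_insert_of_mem _ (Set.mem_insert_of_mem _ rfl))
    have hpart : IsPartitionOf x (withSingletons x {Q}) := by
      apply withSingletons_isPartition
      · rintro p rfl; exact ⟨z₁, Set.mem_insert _ _⟩
      · rintro v ⟨p, hp, hv⟩; exact hPx p hp hv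
      · rintro p rfl q rfl hne; exact absurd rfl hne
    refine ⟨⟨hpart, ?_, ?_, ?_⟩, ?_⟩
    · apply withSingletons_nonObstructing
      · intro p hp
        exact convexPos_of_sphere (fun v hv => habs v (hPx p hp hv))
      · rintro p rfl q rfl hne; exact absurd rfl hne
      · exact hsing_gen _ hPx
    · exact refines_withSingletons x _ _ hpart.2.1
        (by rintro p rfl; exact ⟨Q, Or.inl rfl, hAQ⟩)
    · exact refines_withSingletons x _ _ hpart.2.1
        (by rintro p rfl; exact ⟨Q, Or.inl rfl, hBQ⟩)
    · rintro l ⟨hlp, hlno, hr1, hr2⟩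
      obtain ⟨q₁, hq₁, hsub₁⟩ := hr1 A (Or.inl rfl)
      obtain ⟨q₂, hq₂, hsub₂⟩ := hr2 B (Or.inl rfl)
      have hq12 : q₁ = q₂ := by
        by_contra hne
        have hd := hlno.2 q₁ hq₁ q₂ hq₂ hne
        have hwq₁ : w ∈ convexHull ℝ q₁ := by
          rw [← hullA] at hw1
          exact convexHull_mono hsub₁ hw1
        have hwq₂ : w ∈ convexHull ℝ q₂ := by
          rw [← hullB] at hw2
          exact convexHull_mono hsub₂ hw2
        exact Set.disjoint_left.mp hd hwq₁ hwq₂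
      apply refines_withSingletons x _ _ hlp.2.1
      rintro p rfl
      refine ⟨q₁, hq₁, ?_⟩
      rintro v hv
      rcases hv with rfl | rfl | rfl | rfl
      · exact hsub₁ (Set.mem_insert _ _)
      · exact hsub₁ (Set.mem_insert_of_mem _ rfl)
      · rw [hq12]; exact hsub₂ (Set.mem_insert _ _)
      · rw [hq12]; exact hsub₂ (Set.mem_insert_of_mem _ rfl)
  refine ⟨main1, main2, ?_⟩
  by_cases hd : Disjoint (segment ℝ z₁ z₁') (segment ℝ z₂ z₂')
  · exact ⟨_, (main1 hd).1, (main1 hd).2⟩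
  · exact ⟨_, (main2 hd).1, (main2 hd).2⟩
end
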